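/- arXiv:1511.03570 — 9 statements merged into one kernel-verified Lean document; each statement's English description precedes it below -/
import Mathlib

section
/- Let X and Y be finite nonempty sets and F : X×Y → ℝ^d. For θ ∈ ℝ^d define p_θ(y|x) = exp(⟨θ,F(x,y)⟩)/∑_{y'∈Y} exp(⟨θ,F(x,y')⟩), let M(θ) ∈ ℝ^{d×X} be the matrix whose column indexed by x is ∑_{y∈Y} p_θ(y|x) F(x,y), let h_θ(x) = argmax_{y∈Y} ⟨θ,F(x,y)⟩, and let T(θ) ∈ ℝ^{d×X} be the matrix whose column indexed by x is (1/|h_θ(x)|) ∑_{y∈h_θ(x)} F(x,y). Then: (i) rank M(θ) ≤ rank F for every θ, where F is regarded as the d×(X×Y) matrix with columns F(x,y); and (ii) for every θ ∈ ℝ^d there exists α₀ > 0 such that rank M(αθ) ≥ rank T(θ) for all α ≥ α₀. In particular, max_{θ∈ℝ^d} rank M(θ) ≥ max_{θ∈ℝ^d} rank T(θ). -/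
open scoped Classical BigOperators

/-!
Writing `P(θ)` for the `(X × Y) × X` matrix carrying `p_θ(y|x)` in entry `((x, y), x)`, we have
`M(θ) = F · P(θ)`, which gives (i). Along the ray `αθ` the softmax weights `p_{αθ}(·|x)` converge,
as `α → ∞`, to the uniform distribution on the argmax set `h_θ(x)`, so `M(αθ) → T(θ)`. Rank is
lower semicontinuous, because linearly independent columns stay independent under small
perturbations; hence `rank M(αθ) ≥ rank T(θ)` for all large `α`.
-/

open Filter Topology

theorem Matrix.eventually_rank_ge_nhds {m n 𝕜 : Type*} [Fintype m] [Fintype n]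
    [NontriviallyNormedField 𝕜] [CompleteSpace 𝕜] (B : Matrix m n 𝕜) :
    ∀ᶠ A in 𝓝 B, B.rank ≤ A.rank := by
  obtain ⟨κ, a, ha, hspan, hli⟩ := exists_linearIndependent' 𝕜 B.col
  have : Finite κ := Finite.of_injective a ha
  have : Fintype κ := Fintype.ofFinite κ
  have hcol : Continuous fun A : Matrix m n 𝕜 => A.col ∘ a :=
    continuous_pi fun k => continuous_pi fun i => continuous_apply_apply i (a k)
  filter_upwards [hcol.continuousAt.eventually hli.eventually] with A hA
  calc B.rank = Module.finrank 𝕜 (Submodule.span 𝕜 (Set.range (B.col ∘ a))) := by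
        rw [hspan, Matrix.rank_eq_finrank_span_cols]
    _ = Module.finrank 𝕜 (Submodule.span 𝕜 (Set.range (A.col ∘ a))) := by
        rw [finrank_span_eq_card hli, finrank_span_eq_card hA]
    _ ≤ A.rank := by
        rw [Matrix.rank_eq_finrank_span_cols]
        exact Submodule.finrank_mono (Submodule.span_mono (Set.range_comp_subset_range a A.col))

theorem Matrix.rank_fiberwise_sum_mul_le {m X Y R : Type*} [Fintype X] [Fintype Y] [CommRing R]
    [StrongRankCondition R] (A : Matrix m (X × Y) R) (w : X → Y → R) :
    (Matrix.of fun i x => ∑ y, w x y * A i (x, y)).rank ≤ A.rank := by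
  have : (Matrix.of fun i x => ∑ y, w x y * A i (x, y)) =
      A * (Matrix.of fun xy x => if xy.1 = x then w x xy.2 else 0 : Matrix (X × Y) X R) := by
    ext i x
    rw [Matrix.mul_apply, Fintype.sum_prod_type, Finset.sum_eq_single x]
    · simp [mul_comm]
    · intro x' _ hx'
      simp [hx']
    · simp
  rw [this]
  exact A.rank_mul_le_left _

theorem Real.tendsto_exp_mul_atTop_of_nonpos {c : ℝ} (hc : c ≤ 0) :
    Tendsto (fun α : ℝ => Real.exp (α * c)) atTop (𝓝 (if c = 0 then 1 else 0)) := by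
  rcases hc.lt_or_eq with hc | rfl
  · rw [if_neg hc.ne]
    exact Real.tendsto_exp_atBot.comp (tendsto_id.atTop_mul_const_of_neg hc)
  · simp

theorem Real.exp_mul_div_sum_exp_mul_sub {Y : Type*} [Fintype Y] (s : Y → ℝ) (m α : ℝ) (y : Y) :
    Real.exp (α * s y) / ∑ y', Real.exp (α * s y') =
      Real.exp (α * (s y - m)) / ∑ y', Real.exp (α * (s y' - m)) := by
  simp only [mul_sub, Real.exp_sub, ← Finset.sum_div]
  rw [div_div_div_cancel_right₀ (Real.exp_pos _).ne']

noncomputable def argmaxFinset {Y : Type*} [Fintype Y] (s : Y → ℝ) : Finset Y :=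
  Finset.univ.filter fun y => ∀ y', s y' ≤ s y

theorem tendsto_softmax_smul_atTop {Y : Type*} [Fintype Y] (s : Y → ℝ) (y : Y) :
    Tendsto (fun α : ℝ => Real.exp (α * s y) / ∑ y', Real.exp (α * s y')) atTop
      (𝓝 (if y ∈ argmaxFinset s then ((argmaxFinset s).card : ℝ)⁻¹ else 0)) := by
  set S := argmaxFinset s
  obtain ⟨y₀, -, hy₀⟩ := Finset.exists_max_image Finset.univ s ⟨y, Finset.mem_univ y⟩
  have hmem : ∀ y', y' ∈ S ↔ s y' - s y₀ = 0 := fun y' => by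
    simp only [S, argmaxFinset, Finset.mem_filter, Finset.mem_univ, true_and, sub_eq_zero]
    exact ⟨fun h => le_antisymm (hy₀ y' (Finset.mem_univ _)) (h y₀),
      fun h y'' => h ▸ hy₀ y'' (Finset.mem_univ _)⟩
  have hlim : ∀ y', Tendsto (fun α : ℝ => Real.exp (α * (s y' - s y₀))) atTop
      (𝓝 (if y' ∈ S then 1 else 0)) := fun y' => by
    simpa only [hmem] using
      Real.tendsto_exp_mul_atTop_of_nonpos (sub_nonpos.2 (hy₀ y' (Finset.mem_univ _)))
  have hsum : Tendsto (fun α : ℝ => ∑ y', Real.exp (α * (s y' - s y₀))) atTop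
      (𝓝 (S.card : ℝ)) := by
    simpa [Finset.sum_boole] using tendsto_finsetSum Finset.univ fun y' _ => hlim y'
  have hS : (S.card : ℝ) ≠ 0 := by
    exact_mod_cast (Finset.card_pos.2 ⟨y₀, (hmem y₀).2 (sub_self _)⟩).ne'
  simp only [Real.exp_mul_div_sum_exp_mul_sub s (s y₀)]
  rw [← one_div, ← zero_div (S.card : ℝ), ← ite_div]
  exact (hlim y).div hsum hS

theorem rank_jacobian_vs_tropical_general
    {X Y : Type*} [Fintype X] [Fintype Y]
    {d : ℕ} (F : X → Y → (Fin d → ℝ))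
    (p : (Fin d → ℝ) → Y → X → ℝ)
    (hp : ∀ θ y x, p θ y x =
      Real.exp (∑ i, θ i * F x y i) / ∑ y' : Y, Real.exp (∑ i, θ i * F x y' i))
    (M : (Fin d → ℝ) → Matrix (Fin d) X ℝ)
    (hM : ∀ θ i x, M θ i x = ∑ y : Y, p θ y x * F x y i)
    (h : (Fin d → ℝ) → X → Finset Y)
    (hh : ∀ θ x, h θ x = Finset.univ.filter
      (fun y => ∀ y' : Y, ∑ i, θ i * F x y' i ≤ ∑ i, θ i * F x y i))
    (T : (Fin d → ℝ) → Matrix (Fin d) X ℝ)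
    (hT : ∀ θ i x, T θ i x = (1 / ((h θ x).card : ℝ)) * ∑ y ∈ h θ x, F x y i)
    (Fmat : Matrix (Fin d) (X × Y) ℝ)
    (hF : ∀ i x y, Fmat i (x, y) = F x y i) :
    (∀ θ : Fin d → ℝ, (M θ).rank ≤ Fmat.rank) ∧
    (∀ θ : Fin d → ℝ, ∃ α₀ : ℝ, 0 < α₀ ∧
      ∀ α : ℝ, α₀ ≤ α → (T θ).rank ≤ (M (α • θ)).rank) ∧
    (∀ θ : Fin d → ℝ, ∃ θ' : Fin d → ℝ, (T θ).rank ≤ (M θ').rank) := by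
  have rank_M_le : ∀ θ, (M θ).rank ≤ Fmat.rank := fun θ => by
    have hMθ : M θ = Matrix.of fun i x => ∑ y, p θ y x * Fmat i (x, y) := by
      ext i x
      simp only [hM, hF, Matrix.of_apply]
    exact hMθ ▸ Fmat.rank_fiberwise_sum_mul_le fun x y => p θ y x
  have tendsto_M : ∀ θ, Tendsto (fun α : ℝ => M (α • θ)) atTop (𝓝 (T θ)) := fun θ => by
    refine tendsto_pi_nhds.2 fun i => tendsto_pi_nhds.2 fun x => ?_
    have hscore : ∀ (α : ℝ) y, ∑ j, (α • θ) j * F x y j = α * ∑ j, θ j * F x y j := by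
      simp [Finset.mul_sum, mul_assoc]
    have hlim := tendsto_finsetSum Finset.univ fun y _ =>
      (tendsto_softmax_smul_atTop (fun y => ∑ j, θ j * F x y j) y).mul_const (F x y i)
    simp only [ite_mul, zero_mul, Finset.sum_ite_mem, Finset.univ_inter, ← Finset.mul_sum,
      ← hscore, ← hp, ← hM, ← one_div] at hlim
    rwa [hT, hh]
  have rank_T_le : ∀ θ, ∀ᶠ α in atTop, (T θ).rank ≤ (M (α • θ)).rank := fun θ =>
    (tendsto_M θ).eventually (T θ).eventually_rank_ge_nhds
  refine ⟨rank_M_le, fun θ => ?_, fun θ => ?_⟩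
  · obtain ⟨a, ha⟩ := eventually_atTop.1 (rank_T_le θ)
    exact ⟨max a 1, by positivity, fun α hα => ha α (le_of_max_le_left hα)⟩
  · obtain ⟨α, hα⟩ := (rank_T_le θ).exists
    exact ⟨α • θ, hα⟩

/-- Let `M(θ)` be the matrix with columns `∑_y p_θ(y|x) F(x,y)` (the
rank-relevant part of the Jacobian of the marginal model with sufficient statistics `F`),
and let `T(θ)` be the tropical morphism matrix with columns
`(1/|h_θ(x)|) ∑_{y∈h_θ(x)} F(x,y)`.  Then (i) `rank M(θ) ≤ rank F` for every `θ`;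
(ii) for every `θ` there is `α₀ > 0` with `rank M(αθ) ≥ rank T(θ)` for all `α ≥ α₀`;
in particular `max_θ rank M(θ) ≥ max_θ rank T(θ)`. -/
theorem rank_jacobian_vs_tropical
    {X Y : Type*} [Fintype X] [Fintype Y] [Nonempty X] [Nonempty Y]
    {d : ℕ} (F : X → Y → (Fin d → ℝ))
    (p : (Fin d → ℝ) → Y → X → ℝ)
    (hp : ∀ θ y x, p θ y x =
      Real.exp (∑ i, θ i * F x y i) / ∑ y' : Y, Real.exp (∑ i, θ i * F x y' i))
    (M : (Fin d → ℝ) → Matrix (Fin d) X ℝ)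
    (hM : ∀ θ i x, M θ i x = ∑ y : Y, p θ y x * F x y i)
    (h : (Fin d → ℝ) → X → Finset Y)
    (hh : ∀ θ x, h θ x = Finset.univ.filter
      (fun y => ∀ y' : Y, ∑ i, θ i * F x y' i ≤ ∑ i, θ i * F x y i))
    (T : (Fin d → ℝ) → Matrix (Fin d) X ℝ)
    (hT : ∀ θ i x, T θ i x = (1 / ((h θ x).card : ℝ)) * ∑ y ∈ h θ x, F x y i)
    (Fmat : Matrix (Fin d) (X × Y) ℝ)
    (hF : ∀ i x y, Fmat i (x, y) = F x y i) :
    (∀ θ : Fin d → ℝ, (M θ).rank ≤ Fmat.rank) ∧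
    (∀ θ : Fin d → ℝ, ∃ α₀ : ℝ, 0 < α₀ ∧
      ∀ α : ℝ, α₀ ≤ α → (T θ).rank ≤ (M (α • θ)).rank) ∧
    (∀ θ : Fin d → ℝ, ∃ θ' : Fin d → ℝ, (T θ).rank ≤ (M θ').rank) :=
  rank_jacobian_vs_tropical_general F p hp M hM h hh T hT Fmat hF
end

section
/- Let X = X₁ × ⋯ × X_n with X_i = {0,1,…,|X_i|−1}, |X_i| ≥ 2, and let Λ be an inclusion-closed family of subsets of [n]. Define the matrix A with columns indexed by x ∈ X and rows indexed by the set {∅} ∪ {(λ, x̃_λ) : λ ∈ Λ∖{∅}, x̃_λ ∈ ∏_{i∈λ}(X_i∖{0})}, with entries A_{∅,x} = 1 for all x, and A_{(λ,x̃_λ),x} = 1 if x_λ = x̃_λ and 0 otherwise. Then the row span of A equals V_Λ(X), and rank A = dim V_Λ(X) = 1 + ∑_{λ∈Λ∖{∅}} ∏_{i∈λ}(|X_i|−1). -/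
open scoped Classical BigOperators

/-- `V_Λ(X)`: the span of all functions on `X = ∏ i, X_i` that depend only on the
coordinates `x_λ` for some `λ ∈ Λ`. -/
noncomputable def VLam (n : ℕ) (q : Fin n → ℕ) (Λ : Finset (Finset (Fin n))) :
    Submodule ℝ ((∀ i, Fin (q i)) → ℝ) :=
  Submodule.span ℝ
    {f : (∀ i, Fin (q i)) → ℝ | ∃ s ∈ Λ,
      ∀ x x' : ∀ i, Fin (q i), (∀ i ∈ s, x i = x' i) → f x = f x'}

/-- Row indices of the canonical sufficient statistics matrix of the hierarchical model:
pairs `(λ, x̃)` with `λ ∈ Λ` and `x̃` nonzero on `λ` (the value of `x̃` off `λ` is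
irrelevant; `λ = ∅` gives the all-ones row). -/
def RowIdx (n : ℕ) (q : Fin n → ℕ) (Λ : Finset (Finset (Fin n))) : Type _ :=
  {p : Finset (Fin n) × (∀ i, Fin (q i)) // p.1 ∈ Λ ∧ ∀ i ∈ p.1, (p.2 i).val ≠ 0}

noncomputable instance (n : ℕ) (q : Fin n → ℕ) (Λ : Finset (Finset (Fin n))) :
    Fintype (RowIdx n q Λ) := by
  unfold RowIdx; infer_instance

/-!
Write `δ s y` for the indicator of the cylinder `{x | x_s = y_s}`. Summing over the value of one
coordinate `i ∈ s` gives `δ (s \ {i}) y = ∑ a, δ s (y[i ↦ a])`, so a zero coordinate `y i = 0`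
can be traded for a smaller set and nonzero values. By induction every `δ s y` with `s ∈ Λ`
lies in the span of the rows, which are the reduced indicators `δ (supp y) y` with
`supp y ∈ Λ`; these therefore span `V_Λ`. For `Λ` the full power set they span all of `ℝ^X`
and there are `|X|` of them, so they are linearly independent, and the dimension count is the
number of `y` with `supp y ∈ Λ`.
-/

section Cylinder

variable {ι : Type*} {α : ι → Type*} (R : Type*)

noncomputable def cylinderIndicator [Zero R] [One R] (s : Finset ι) (y x : ∀ i, α i) : R :=
  if ∀ i ∈ s, x i = y i then 1 else 0

variable {R}

lemma dependsOn_cylinderIndicator [Zero R] [One R] (s : Finset ι) (y : ∀ i, α i) :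
    DependsOn (cylinderIndicator R s y) s := by
  intro x x' h
  simp only [cylinderIndicator, Finset.mem_coe] at h ⊢
  congr 1
  exact propext (forall₂_congr fun i hi => by rw [h i hi])

lemma cylinderIndicator_congr_right [Zero R] [One R] {s : Finset ι} {y y' : ∀ i, α i}
    (h : ∀ i ∈ s, y i = y' i) : cylinderIndicator R s y = cylinderIndicator R s y' := by
  funext x
  simp only [cylinderIndicator]
  congr 1
  exact propext (forall₂_congr fun i hi => by rw [h i hi])

lemma cylinderIndicator_erase_eq_sum [AddCommMonoidWithOne R] {s : Finset ι} {i : ι}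
    [Fintype (α i)] (hi : i ∈ s) (y : ∀ i, α i) :
    cylinderIndicator R (s.erase i) y = ∑ a, cylinderIndicator R s (Function.update y i a) := by
  funext x
  have key : ∀ a, (∀ j ∈ s, x j = Function.update y i a j) ↔
      (x i = a ∧ ∀ j ∈ s.erase i, x j = y j) := by
    intro a
    rw [← Finset.insert_erase hi, Finset.forall_mem_insert, Function.update_self,
      Finset.erase_insert_eq_erase, Finset.erase_idem]
    refine and_congr_right fun _ => forall₂_congr fun j hj => ?_
    rw [Function.update_of_ne (Finset.ne_of_mem_erase hj)]
  simp only [Finset.sum_apply, cylinderIndicator, key, ite_and, Finset.sum_ite_eq,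
    Finset.mem_univ, if_true]

lemma cylinderIndicator_eq_erase_sub_sum [Ring R] {s : Finset ι} {i : ι}
    [Zero (α i)] [Fintype (α i)] (hi : i ∈ s) {y : ∀ i, α i} (hyi : y i = 0) :
    cylinderIndicator R s y = cylinderIndicator R (s.erase i) y -
      ∑ a ∈ Finset.univ.erase 0, cylinderIndicator R s (Function.update y i a) := by
  rw [cylinderIndicator_erase_eq_sum hi, ← Finset.add_sum_erase _ _ (Finset.mem_univ 0), ← hyi,
    Function.update_eq_self, add_sub_cancel_right]

end Cylinder

section Support

variable {ι : Type*} [Fintype ι] {α : ι → Type*} [∀ i, Zero (α i)]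

noncomputable def coordSupport (y : ∀ i, α i) : Finset ι := {i | y i ≠ 0}

lemma mem_coordSupport {y : ∀ i, α i} {i : ι} : i ∈ coordSupport y ↔ y i ≠ 0 := by
  simp [coordSupport]

lemma coordSupport_piecewise {s : Finset ι} {y : ∀ i, α i} (h : ∀ i ∈ s, y i ≠ 0) :
    coordSupport (s.piecewise y 0) = s := by
  ext i
  by_cases hi : i ∈ s <;> simp [mem_coordSupport, hi, h]

variable (R : Type*)

noncomputable def reducedCylinder [Zero R] [One R] (y : ∀ i, α i) : (∀ i, α i) → R :=
  cylinderIndicator R (coordSupport y) y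

variable {R}

lemma cylinderIndicator_eq_reducedCylinder [Zero R] [One R] {s : Finset ι} {y : ∀ i, α i}
    (h : ∀ i ∈ s, y i ≠ 0) : cylinderIndicator R s y = reducedCylinder R (s.piecewise y 0) := by
  rw [reducedCylinder, coordSupport_piecewise h]
  exact cylinderIndicator_congr_right fun i hi => (s.piecewise_eq_of_mem y 0 hi).symm

lemma cylinderIndicator_mem_image_reducedCylinder [Zero R] [One R] {Λ : Finset (Finset ι)}
    {s : Finset ι} (hs : s ∈ Λ) {y : ∀ i, α i} (hy : ∀ i ∈ s, y i ≠ 0) :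
    cylinderIndicator R s y ∈ reducedCylinder R '' {y : ∀ i, α i | coordSupport y ∈ Λ} := by
  rw [cylinderIndicator_eq_reducedCylinder hy]
  exact ⟨_, by rwa [Set.mem_ofPred_eq, coordSupport_piecewise hy], rfl⟩

theorem cylinderIndicator_mem_span_reducedCylinder [Ring R] [∀ i, Fintype (α i)]
    {Λ : Finset (Finset ι)} (hΛ : IsLowerSet (Λ : Set (Finset ι))) {s : Finset ι} (hs : s ∈ Λ)
    (y : ∀ i, α i) :
    cylinderIndicator R s y ∈
      Submodule.span R (reducedCylinder R '' {y : ∀ i, α i | coordSupport y ∈ Λ}) := by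
  set M := Submodule.span R (reducedCylinder R '' {y : ∀ i, α i | coordSupport y ∈ Λ})
  induction s using Finset.strongInduction generalizing y with
  | H s ih =>
  suffices ∀ Z : Finset ι, ∀ y : ∀ i, α i, {i ∈ s | y i = 0} ⊆ Z →
      cylinderIndicator R s y ∈ M from this s y (Finset.filter_subset _ s)
  intro Z
  induction Z using Finset.induction_on with
  | empty =>
    intro y hzeros
    have hy : ∀ i ∈ s, y i ≠ 0 := fun i hi h0 => by
      simpa using hzeros (Finset.mem_filter.mpr ⟨hi, h0⟩)
    exact Submodule.subset_span (cylinderIndicator_mem_image_reducedCylinder hs hy)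
  | insert i Z _ ihZ =>
    intro y hzeros
    by_cases hyi : i ∈ s ∧ y i = 0
    · obtain ⟨hi, hyi⟩ := hyi
      rw [cylinderIndicator_eq_erase_sub_sum hi hyi]
      refine sub_mem (ih _ (Finset.erase_ssubset hi) (hΛ (Finset.erase_subset i s) hs) y)
        (Submodule.sum_mem _ fun a ha => ihZ _ fun j hj => ?_)
      obtain ⟨hjs, hj0⟩ := Finset.mem_filter.mp hj
      have hji : j ≠ i := by
        rintro rfl
        rw [Function.update_self] at hj0
        exact Finset.ne_of_mem_erase ha hj0
      rw [Function.update_of_ne hji] at hj0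
      exact Finset.mem_of_mem_insert_of_ne (hzeros (Finset.mem_filter.mpr ⟨hjs, hj0⟩)) hji
    · refine ihZ y ((Finset.subset_insert_iff_of_notMem fun hi => hyi ?_).mp hzeros)
      exact Finset.mem_filter.mp hi

end Support

section Span

variable {ι : Type*} [Fintype ι] {α : ι → Type*} [∀ i, Zero (α i)] [∀ i, Fintype (α i)]
  {R : Type*}

lemma mem_span_range_cylinderIndicator [Semiring R] {f : (∀ i, α i) → R} {s : Finset ι}
    (hf : DependsOn f s) : f ∈ Submodule.span R (Set.range (cylinderIndicator R s)) := by
  set T := Finset.univ.image fun x : ∀ i, α i => s.piecewise x 0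
  have hf' : f = ∑ y ∈ T, f y • cylinderIndicator R s y := by
    funext x
    have key : ∀ y ∈ T, (∀ i ∈ s, x i = y i) ↔ s.piecewise x 0 = y := by
      simp only [T, Finset.mem_image, Finset.mem_univ, true_and, forall_exists_index]
      rintro _ z rfl
      refine ⟨fun h => funext fun i => ?_, fun h i hi => ?_⟩
      · by_cases hi : i ∈ s
        · rw [s.piecewise_eq_of_mem _ _ hi, h i hi]
        · rw [s.piecewise_eq_of_notMem _ _ hi, s.piecewise_eq_of_notMem _ _ hi]
      · rw [← s.piecewise_eq_of_mem x 0 hi, h]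
    simp only [Finset.sum_apply, Pi.smul_apply, smul_eq_mul, cylinderIndicator]
    rw [Finset.sum_congr rfl fun y hy => show _ = if s.piecewise x 0 = y then f y else 0 by
      simp only [key y hy, mul_boole], Finset.sum_ite_eq,
      if_pos (Finset.mem_image_of_mem _ (Finset.mem_univ x))]
    exact hf fun i hi => (s.piecewise_eq_of_mem x 0 hi).symm
  rw [hf']
  exact Submodule.sum_mem _ fun y _ => Submodule.smul_mem _ _ (Submodule.subset_span ⟨y, rfl⟩)

theorem span_dependsOn_eq_span_reducedCylinder [Ring R] {Λ : Finset (Finset ι)}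
    (hΛ : IsLowerSet (Λ : Set (Finset ι))) :
    Submodule.span R {f | ∃ s ∈ Λ, DependsOn f (s : Set ι)} =
      Submodule.span R (reducedCylinder R '' {y : ∀ i, α i | coordSupport y ∈ Λ}) := by
  apply le_antisymm
  · rw [Submodule.span_le]
    rintro f ⟨s, hs, hf⟩
    refine Submodule.span_le.mpr ?_ (mem_span_range_cylinderIndicator hf)
    rintro _ ⟨y, rfl⟩
    exact cylinderIndicator_mem_span_reducedCylinder hΛ hs y
  · refine Submodule.span_mono ?_
    rintro _ ⟨y, hy, rfl⟩
    exact ⟨coordSupport y, hy, dependsOn_cylinderIndicator _ _⟩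

end Span

section Dimension

variable {ι : Type*} [Fintype ι] {α : ι → Type*} [∀ i, Zero (α i)] [∀ i, Fintype (α i)]

lemma card_coordSupport_eq (s : Finset ι) :
    Fintype.card {y : ∀ i, α i // coordSupport y = s} = ∏ i ∈ s, (Fintype.card (α i) - 1) := by
  have e : {y : ∀ i, α i // coordSupport y = s} ≃ ∀ i, {b : α i // b ≠ 0 ↔ i ∈ s} :=
    (Equiv.subtypeEquivRight fun y => by simp [Finset.ext_iff, mem_coordSupport]).trans
      Equiv.subtypePiEquivPi
  have hfactor (i : ι) : Fintype.card {b : α i // b ≠ 0 ↔ i ∈ s} =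
      if i ∈ s then Fintype.card (α i) - 1 else 1 := by
    split_ifs with hi <;> simp [hi]
  rw [Fintype.card_congr e, Fintype.card_pi, Finset.prod_congr rfl fun i _ => hfactor i,
    Finset.prod_ite_mem, Finset.univ_inter]

lemma card_coordSupport_mem (Λ : Finset (Finset ι)) :
    Fintype.card {y : ∀ i, α i // coordSupport y ∈ Λ} =
      ∑ s ∈ Λ, ∏ i ∈ s, (Fintype.card (α i) - 1) := by
  rw [Fintype.card_subtype, Finset.card_eq_sum_card_fiberwise (f := coordSupport) (t := Λ)
    fun y hy => by simpa using hy]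
  refine Finset.sum_congr rfl fun s hs => ?_
  rw [← card_coordSupport_eq, Fintype.card_subtype, Finset.filter_filter]
  congr 1
  ext y
  simp only [Finset.mem_filter, Finset.mem_univ, true_and, and_iff_right_iff_imp]
  rintro rfl
  exact hs

variable (K : Type*) [Field K]

theorem linearIndependent_reducedCylinder :
    LinearIndependent K (reducedCylinder K : (∀ i, α i) → (∀ i, α i) → K) := by
  refine linearIndependent_of_top_le_span_of_card_eq_finrank ?_
    (Module.finrank_fintype_fun_eq_card K).symm
  have hall := span_dependsOn_eq_span_reducedCylinder (α := α) (R := K) (Λ := Finset.univ)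
    (by simpa using isLowerSet_univ)
  simp only [Finset.mem_univ, Set.ofPred_true, Set.image_univ] at hall
  rw [← hall]
  exact fun f _ => Submodule.subset_span ⟨Finset.univ, trivial, by
    simpa using dependsOn_univ f⟩

theorem finrank_span_reducedCylinder (Λ : Finset (Finset ι)) :
    Module.finrank K
        (Submodule.span K (reducedCylinder K '' {y : ∀ i, α i | coordSupport y ∈ Λ})) =
      ∑ s ∈ Λ, ∏ i ∈ s, (Fintype.card (α i) - 1) := by
  rw [Set.image_eq_range]
  exact (finrank_span_eq_card ((linearIndependent_reducedCylinder K).comp _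
    Subtype.val_injective)).trans (card_coordSupport_mem Λ)

end Dimension

/-- The 0/1 matrix `A` with the all-ones row (index `λ = ∅`) and rows
`A_{(λ,x̃_λ),x} = 1` iff `x_λ = x̃_λ` (for `λ ∈ Λ∖{∅}`, `x̃_λ` with nonzero entries) has
row span `V_Λ(X)`, and `rank A = dim V_Λ(X) = 1 + ∑_{λ∈Λ∖{∅}} ∏_{i∈λ}(|X_i|−1)`. -/
theorem hierarchical_suff_stat_row_span_and_rank
    (n : ℕ) (q : Fin n → ℕ) (hq : ∀ i, 2 ≤ q i)
    (Λ : Finset (Finset (Fin n))) (hempty : ∅ ∈ Λ)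
    (hΛ : ∀ s ∈ Λ, ∀ t ⊆ s, t ∈ Λ)
    (A : Matrix (RowIdx n q Λ) (∀ i, Fin (q i)) ℝ)
    (hA : ∀ (r : RowIdx n q Λ) (x : ∀ i, Fin (q i)),
      A r x = if ∀ i ∈ r.1.1, x i = r.1.2 i then 1 else 0) :
    Submodule.span ℝ (Set.range A) = VLam n q Λ ∧
    A.rank = Module.finrank ℝ (VLam n q Λ) ∧
    Module.finrank ℝ (VLam n q Λ) = 1 + ∑ s ∈ Λ.erase ∅, ∏ i ∈ s, (q i - 1) := by
  have : ∀ i, NeZero (q i) := fun i => ⟨by have := hq i; omega⟩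
  have hrow (r : RowIdx n q Λ) : A r = cylinderIndicator ℝ r.1.1 r.1.2 := by
    funext x
    rw [hA, cylinderIndicator]
    congr 1
  have hrange : Set.range A = reducedCylinder ℝ '' {y | coordSupport y ∈ Λ} := by
    apply subset_antisymm
    · rintro _ ⟨r, rfl⟩
      exact hrow r ▸ cylinderIndicator_mem_image_reducedCylinder r.2.1
        fun i hi => Fin.val_ne_zero_iff.mp (r.2.2 i hi)
    · rintro _ ⟨y, hy, rfl⟩
      exact ⟨⟨(coordSupport y, y), hy, fun i hi => Fin.val_ne_zero_iff.mpr
        (mem_coordSupport.mp hi)⟩, hrow _⟩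
  have hspan : Submodule.span ℝ (Set.range A) = VLam n q Λ := by
    rw [hrange]
    exact (span_dependsOn_eq_span_reducedCylinder fun s t hts hs => hΛ s hs t hts).symm
  refine ⟨hspan, by rw [Matrix.rank_eq_finrank_span_row, Matrix.row, hspan], ?_⟩
  rw [← hspan, hrange, finrank_span_reducedCylinder, ← Finset.add_sum_erase _ _ hempty]
  simp
end

section
/- Let X = X₁ × ⋯ × X_n with |X_i| ≥ 2, let Λ be an inclusion-closed family of subsets of [n], and let A ∈ ℝ^{a×X} be a matrix whose rows span V_Λ(X). Then for every x ∈ X, the columns {A_{x'} : x' ∈ K(x,Λ)} of A indexed by the Λ-ball centered at x are linearly independent; in particular, rank(A_{K(x,Λ)}) = |K(x,Λ)| = K(Λ) = 1 + ∑_{λ∈Λ∖{∅}} ∏_{i∈λ}(|X_i|−1) = dim V_Λ(X). -/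
/-!
Fix the centre `x` and, for `u ∈ K(x,Λ)`, let `δ_u` be the indicator of the subcube
`{y : y_i = u_i whenever u_i ≠ x_i}`. Each `δ_u` lies in `V_Λ(X)`, and together they span it: a
function of `x_s` is a combination of indicators of `{y : y_s = c_s}`, and a factor
`[y_j = x_j]` can be replaced by `1 - ∑_{b ≠ x_j} [y_j = b]`, which only produces subcubes of
the form above. Ordering `K(x,Λ)` by the number of coordinates differing from `x`, the matrix
`(δ_u(v))_{u,v}` is upper triangular with unit diagonal, so the `δ_u` form a basis of `V_Λ(X)`
and the evaluations at the points of `K(x,Λ)` are linearly independent on `V_Λ(X)`. A linear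
dependence among the columns of `A` indexed by `K(x,Λ)` is a combination of these evaluations
vanishing on the rows of `A`, hence on their span `V_Λ(X)`.
-/

open scoped Classical BigOperators

open Matrix

theorem Matrix.isUnit_of_upperTriangular_wrt {m α 𝕜 : Type*} [Fintype m] [DecidableEq m]
    [LinearOrder α] [Field 𝕜] (M : Matrix m m 𝕜) (r : m → α) (hdiag : ∀ i, M i i ≠ 0)
    (hupper : ∀ i j, i ≠ j → M i j ≠ 0 → r i < r j) : IsUnit M := by
  suffices h : ∀ c, M *ᵥ c = 0 → c = 0 from
    mulVec_injective_iff_isUnit.1 fun c d hcd =>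
      sub_eq_zero.1 (h _ (by rw [mulVec_sub, hcd, sub_self]))
  intro c hc
  by_contra hne
  obtain ⟨j₀, hj₀, hmax⟩ := Finset.exists_max_image {j | c j ≠ 0} r
    (by simpa [Finset.Nonempty, funext_iff] using hne)
  have hrow : (M *ᵥ c) j₀ = M j₀ j₀ * c j₀ := by
    refine Finset.sum_eq_single j₀ (fun j _ hj => ?_) (by simp)
    by_cases hcj : c j = 0
    · rw [hcj, mul_zero]
    · refine mul_eq_zero_of_left (not_ne_iff.1 fun hM => ?_) _
      exact (hupper j₀ j hj.symm hM).not_ge (hmax j (by simpa using hcj))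
  rw [hc] at hrow
  exact mul_ne_zero (hdiag j₀) (by simpa using hj₀) hrow.symm

section ProductSpace

variable {ι : Type*} [Fintype ι] {β : ι → Type*} [∀ i, DecidableEq (β i)]

def diffCoords (x y : ∀ i, β i) : Finset ι :=
  Finset.univ.filter fun i => y i ≠ x i

@[simp]
theorem mem_diffCoords {x y : ∀ i, β i} {i : ι} : i ∈ diffCoords x y ↔ y i ≠ x i := by
  simp [diffCoords]

@[simp]
theorem diffCoords_self (x : ∀ i, β i) : diffCoords x x = ∅ := by
  simp [diffCoords]

theorem diffCoords_update [DecidableEq ι] {x u : ∀ i, β i} {j : ι} {b : β j}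
    (hb : b ≠ x j) :
    diffCoords x (Function.update u j b) = insert j (diffCoords x u) := by
  ext i
  rcases eq_or_ne i j with rfl | hij
  · simp [hb]
  · simp [hij]

def lambdaBall (x : ∀ i, β i) (Λ : Finset (Finset ι)) : Set (∀ i, β i) :=
  {y | diffCoords x y ∈ Λ}

@[simp]
theorem mem_lambdaBall {x y : ∀ i, β i} {Λ : Finset (Finset ι)} :
    y ∈ lambdaBall x Λ ↔ diffCoords x y ∈ Λ :=
  Iff.rfl

end ProductSpace

section Indicators

variable {ι : Type*} {β : ι → Type*} [∀ i, DecidableEq (β i)] {𝕜 : Type*} [CommRing 𝕜]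

variable (𝕜) in
def coordIndicator (i : ι) (b : β i) : (∀ i, β i) → 𝕜 :=
  fun y => if y i = b then 1 else 0

variable (𝕜) in
def agreeIndicator (s : Finset ι) (u : ∀ i, β i) : (∀ i, β i) → 𝕜 :=
  ∏ i ∈ s, coordIndicator 𝕜 i (u i)

theorem agreeIndicator_apply (s : Finset ι) (u y : ∀ i, β i) :
    agreeIndicator 𝕜 s u y = ∏ i ∈ s, if y i = u i then 1 else 0 :=
  Finset.prod_apply y s _

theorem agreeIndicator_apply_of_forall_eq {s : Finset ι} {u y : ∀ i, β i}
    (h : ∀ i ∈ s, y i = u i) : agreeIndicator 𝕜 s u y = 1 := by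
  rw [agreeIndicator_apply]
  exact Finset.prod_eq_one fun i hi => if_pos (h i hi)

theorem forall_eq_of_agreeIndicator_apply_ne_zero {s : Finset ι} {u y : ∀ i, β i}
    (h : agreeIndicator 𝕜 s u y ≠ 0) : ∀ i ∈ s, y i = u i := by
  intro i hi
  by_contra hne
  exact h (by rw [agreeIndicator_apply]; exact Finset.prod_eq_zero hi (if_neg hne))

theorem coordIndicator_eq_one_sub [∀ i, Fintype (β i)] (i : ι) (a : β i) :
    coordIndicator 𝕜 i a = 1 - ∑ b ∈ Finset.univ.erase a, coordIndicator 𝕜 i b := by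
  have hsum : ∑ b, coordIndicator (β := β) 𝕜 i b = 1 := by
    funext y
    simp [coordIndicator, Finset.sum_apply]
  rw [eq_sub_iff_add_eq, Finset.add_sum_erase _ _ (Finset.mem_univ a), hsum]

variable [Fintype ι]

variable (𝕜) in
def cubeIndicator (x u : ∀ i, β i) : (∀ i, β i) → 𝕜 :=
  agreeIndicator 𝕜 (diffCoords x u) u

variable (𝕜) in
def lambdaSpan (Λ : Finset (Finset ι)) : Submodule 𝕜 ((∀ i, β i) → 𝕜) :=
  Submodule.span 𝕜
    {f | ∃ s ∈ Λ, ∀ y y' : ∀ i, β i, (∀ i ∈ s, y i = y' i) → f y = f y'}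

theorem cubeIndicator_self (x u : ∀ i, β i) : cubeIndicator 𝕜 x u u = 1 :=
  agreeIndicator_apply_of_forall_eq fun _ _ => rfl

theorem cubeIndicator_mem_lambdaSpan {Λ : Finset (Finset ι)} {x u : ∀ i, β i}
    (hu : u ∈ lambdaBall x Λ) : cubeIndicator 𝕜 x u ∈ lambdaSpan 𝕜 Λ :=
  Submodule.subset_span ⟨diffCoords x u, hu, fun y y' h => by
    simp only [cubeIndicator, agreeIndicator_apply]
    exact Finset.prod_congr rfl fun i hi => by rw [h i hi]⟩

theorem cubeIndicator_update [DecidableEq ι] {x u : ∀ i, β i} {j : ι} {b : β j}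
    (hb : b ≠ x j) (hj : j ∉ diffCoords x u) :
    cubeIndicator 𝕜 x (Function.update u j b) =
      coordIndicator 𝕜 j b * cubeIndicator 𝕜 x u := by
  rw [cubeIndicator, agreeIndicator, diffCoords_update hb, Finset.prod_insert hj,
    Function.update_self]
  congr 1
  exact Finset.prod_congr rfl fun i hi => by
    rw [Function.update_of_ne (ne_of_mem_of_not_mem hi hj)]

end Indicators

section Span

variable {ι : Type*} [Fintype ι] {β : ι → Type*} [∀ i, DecidableEq (β i)] {𝕜 : Type*}
  [CommRing 𝕜]

variable (𝕜) in
def cubeSpan (x : ∀ i, β i) (s : Finset ι) : Submodule 𝕜 ((∀ i, β i) → 𝕜) :=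
  Submodule.span 𝕜 (cubeIndicator 𝕜 x '' {u | diffCoords x u ⊆ s})

theorem cubeSpan_mono (x : ∀ i, β i) {s t : Finset ι} (h : s ⊆ t) :
    cubeSpan 𝕜 x s ≤ cubeSpan 𝕜 x t :=
  Submodule.span_mono (Set.image_mono fun _ hu => Set.Subset.trans hu h)

variable [DecidableEq ι]

theorem coordIndicator_mul_mem_cubeSpan {x : ∀ i, β i} {s : Finset ι} {j : ι} {b : β j}
    (hb : b ≠ x j) (hj : j ∉ s) {p : (∀ i, β i) → 𝕜} (hp : p ∈ cubeSpan 𝕜 x s) :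
    coordIndicator 𝕜 j b * p ∈ cubeSpan 𝕜 x (insert j s) := by
  suffices cubeSpan 𝕜 x s ≤
      (cubeSpan 𝕜 x (insert j s)).comap (LinearMap.mulLeft 𝕜 (coordIndicator 𝕜 j b)) from
    this hp
  refine Submodule.span_le.2 ?_
  rintro _ ⟨u, hu, rfl⟩
  have hju : j ∉ diffCoords x u := fun h => hj (hu h)
  refine Submodule.subset_span ⟨Function.update u j b, ?_, cubeIndicator_update hb hju⟩
  show diffCoords x _ ⊆ _
  rw [diffCoords_update hb]
  exact Finset.insert_subset_insert j hu

variable [∀ i, Fintype (β i)]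

theorem agreeIndicator_mem_cubeSpan (x : ∀ i, β i) (s : Finset ι) (c : ∀ i, β i) :
    agreeIndicator 𝕜 s c ∈ cubeSpan 𝕜 x s := by
  induction s using Finset.induction_on with
  | empty =>
    have : agreeIndicator 𝕜 ∅ c = cubeIndicator 𝕜 x x := by
      simp [cubeIndicator, agreeIndicator]
    exact this ▸ Submodule.subset_span ⟨x, by simp, rfl⟩
  | insert j s hj ih =>
    rw [agreeIndicator, Finset.prod_insert hj, ← agreeIndicator]
    by_cases hcj : c j = x j
    · rw [hcj, coordIndicator_eq_one_sub, sub_mul, one_mul, Finset.sum_mul]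
      exact Submodule.sub_mem _ (cubeSpan_mono x (Finset.subset_insert j s) ih)
        (Submodule.sum_mem _ fun _ hb =>
          coordIndicator_mul_mem_cubeSpan (Finset.ne_of_mem_erase hb) hj ih)
    · exact coordIndicator_mul_mem_cubeSpan hcj hj ih

theorem mem_cubeSpan_of_forall_eq (x : ∀ i, β i) {s : Finset ι} {f : (∀ i, β i) → 𝕜}
    (hf : ∀ y y' : ∀ i, β i, (∀ i ∈ s, y i = y' i) → f y = f y') :
    f ∈ cubeSpan 𝕜 x s := by
  let π : (∀ i, β i) → ∀ i, β i := fun y i => if i ∈ s then y i else x i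
  have hπ : ∀ y, ∀ i ∈ s, π y i = y i := fun y i hi => if_pos hi
  have hdecomp : f = ∑ c ∈ Finset.univ.image π, f c • agreeIndicator 𝕜 s c := by
    funext y
    simp only [Finset.sum_apply, Pi.smul_apply, smul_eq_mul]
    have hyπ : ∀ i ∈ s, y i = π y i := fun i hi => (hπ y i hi).symm
    rw [Finset.sum_eq_single (π y), agreeIndicator_apply_of_forall_eq hyπ, mul_one, hf y (π y) hyπ]
    · rintro _ hc hne
      obtain ⟨z, -, rfl⟩ := Finset.mem_image.1 hc
      refine mul_eq_zero_of_right _ (not_ne_iff.1 fun h => hne (funext fun i => ?_))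
      by_cases hi : i ∈ s
      · rw [hπ y i hi]
        exact (forall_eq_of_agreeIndicator_apply_ne_zero h i hi).symm
      · simp [π, hi]
    · exact fun h => absurd (Finset.mem_image_of_mem π (Finset.mem_univ y)) h
  rw [hdecomp]
  exact Submodule.sum_mem _ fun c _ =>
    Submodule.smul_mem _ _ (agreeIndicator_mem_cubeSpan x s c)

theorem lambdaSpan_eq_span_cubeIndicator (x : ∀ i, β i) {Λ : Finset (Finset ι)}
    (hΛ : ∀ s ∈ Λ, ∀ t ⊆ s, t ∈ Λ) :
    lambdaSpan 𝕜 Λ =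
      Submodule.span 𝕜 (Set.range fun u : lambdaBall x Λ => cubeIndicator 𝕜 x u) := by
  refine le_antisymm (Submodule.span_le.2 ?_) (Submodule.span_le.2 ?_)
  · rintro f ⟨s, hs, hf⟩
    refine Submodule.span_mono ?_ (mem_cubeSpan_of_forall_eq x hf)
    rintro _ ⟨u, hu, rfl⟩
    exact ⟨⟨u, hΛ s hs _ hu⟩, rfl⟩
  · rintro _ ⟨u, rfl⟩
    exact cubeIndicator_mem_lambdaSpan u.2

end Span

section Dimension

variable {ι : Type*} [Fintype ι] {β : ι → Type*} [∀ i, DecidableEq (β i)] {𝕜 : Type*}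
  [Field 𝕜]

theorem eq_of_cubeIndicator_apply_ne_zero {x u v : ∀ i, β i} (h : cubeIndicator 𝕜 x u v ≠ 0)
    (hcard : (diffCoords x v).card ≤ (diffCoords x u).card) : v = u := by
  have hagree := forall_eq_of_agreeIndicator_apply_ne_zero h
  have hsub : diffCoords x u ⊆ diffCoords x v := fun i hi => by
    rw [mem_diffCoords, hagree i hi]
    exact mem_diffCoords.1 hi
  have hdiff := Finset.eq_of_subset_of_card_le hsub hcard
  funext i
  by_cases hi : i ∈ diffCoords x u
  · exact hagree i hi
  · have hv : i ∉ diffCoords x v := hdiff ▸ hi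
    rw [mem_diffCoords, not_not] at hi hv
    rw [hi, hv]

variable [DecidableEq ι] [∀ i, Fintype (β i)]

variable (𝕜) in
def cubeIndicatorMatrix (x : ∀ i, β i) (Λ : Finset (Finset ι)) :
    Matrix (lambdaBall x Λ) (lambdaBall x Λ) 𝕜 :=
  Matrix.of fun u v => cubeIndicator 𝕜 x u v

theorem isUnit_cubeIndicatorMatrix (x : ∀ i, β i) (Λ : Finset (Finset ι)) :
    IsUnit (cubeIndicatorMatrix 𝕜 x Λ) :=
  Matrix.isUnit_of_upperTriangular_wrt _ (fun u => (diffCoords x u.1).card)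
    (fun u => by simp [cubeIndicatorMatrix, cubeIndicator_self])
    fun u v hne h => lt_of_not_ge fun hcard =>
      hne (Subtype.ext (eq_of_cubeIndicator_apply_ne_zero h hcard)).symm

theorem linearIndependent_cubeIndicator (x : ∀ i, β i) (Λ : Finset (Finset ι)) :
    LinearIndependent 𝕜 fun u : lambdaBall x Λ => cubeIndicator 𝕜 x u := by
  refine Fintype.linearIndependent_iff.2 fun c hc => congrFun ?_
  have hvec : c ᵥ* cubeIndicatorMatrix 𝕜 x Λ = 0 := funext fun v => by
    simpa [cubeIndicatorMatrix, Matrix.vecMul, dotProduct] using congrFun hc v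
  exact Matrix.vecMul_injective_iff_isUnit.2 (isUnit_cubeIndicatorMatrix x Λ)
    (hvec.trans (Matrix.zero_vecMul _).symm)

theorem finrank_lambdaSpan (x : ∀ i, β i) {Λ : Finset (Finset ι)}
    (hΛ : ∀ s ∈ Λ, ∀ t ⊆ s, t ∈ Λ) :
    Module.finrank 𝕜 (lambdaSpan 𝕜 Λ : Submodule 𝕜 ((∀ i, β i) → 𝕜)) =
      Nat.card (lambdaBall x Λ) := by
  rw [lambdaSpan_eq_span_cubeIndicator x hΛ,
    finrank_span_eq_card (linearIndependent_cubeIndicator x Λ), Nat.card_eq_fintype_card]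

theorem eq_zero_of_forall_sum_mul_apply_eq_zero {x : ∀ i, β i} {Λ : Finset (Finset ι)}
    (c : lambdaBall x Λ → 𝕜)
    (hc : ∀ f : (∀ i, β i) → 𝕜, f ∈ lambdaSpan 𝕜 Λ → ∑ v, c v * f v = 0) : c = 0 := by
  have hvec : cubeIndicatorMatrix 𝕜 x Λ *ᵥ c = 0 := funext fun u => by
    simpa [cubeIndicatorMatrix, Matrix.mulVec, dotProduct, mul_comm] using
      hc _ (cubeIndicator_mem_lambdaSpan u.2)
  exact Matrix.mulVec_injective_iff_isUnit.2 (isUnit_cubeIndicatorMatrix x Λ)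
    (hvec.trans (Matrix.mulVec_zero _).symm)

theorem linearIndependent_columns_of_span_rows_eq {m : Type*} {Λ : Finset (Finset ι)}
    {A : Matrix m (∀ i, β i) 𝕜} (hA : Submodule.span 𝕜 (Set.range A) = lambdaSpan 𝕜 Λ)
    (x : ∀ i, β i) : LinearIndependent 𝕜 fun v : lambdaBall x Λ => fun i => A i v := by
  refine Fintype.linearIndependent_iff.2 fun c hc =>
    congrFun (eq_zero_of_forall_sum_mul_apply_eq_zero c ?_)
  let φ : ((∀ i, β i) → 𝕜) →ₗ[𝕜] 𝕜 := ∑ v, c v • LinearMap.proj v.1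
  have hrows : Submodule.span 𝕜 (Set.range A) ≤ LinearMap.ker φ := by
    refine Submodule.span_le.2 ?_
    rintro _ ⟨i, rfl⟩
    simpa [φ] using congrFun hc i
  intro f hf
  simpa [φ] using hrows (hA ▸ hf)

end Dimension

section Counting

variable {ι : Type*} [Fintype ι] [DecidableEq ι] {β : ι → Type*} [∀ i, Fintype (β i)]
  [∀ i, DecidableEq (β i)]

theorem card_filter_diffCoords_eq (x : ∀ i, β i) (s : Finset ι) :
    (Finset.univ.filter fun y => diffCoords x y = s).card =
      ∏ i ∈ s, (Fintype.card (β i) - 1) := by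
  have hfiber : (Finset.univ.filter fun y => diffCoords x y = s) =
      Fintype.piFinset fun i => if i ∈ s then Finset.univ.erase (x i) else {x i} := by
    ext y
    simp only [Finset.mem_filter, Finset.mem_univ, true_and, Fintype.mem_piFinset,
      Finset.ext_iff, mem_diffCoords]
    refine forall_congr' fun i => ?_
    split_ifs with hi <;> simp [hi]
  rw [hfiber, Fintype.card_piFinset]
  simp [apply_ite Finset.card, Finset.prod_ite_mem]

theorem card_lambdaBall (x : ∀ i, β i) (Λ : Finset (Finset ι)) :
    Nat.card (lambdaBall x Λ) = ∑ s ∈ Λ, ∏ i ∈ s, (Fintype.card (β i) - 1) := by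
  rw [Nat.card_eq_fintype_card, Fintype.card_subtype,
    Finset.card_eq_sum_card_fiberwise (f := diffCoords x) (t := Λ) fun y hy => by
      simpa using hy]
  refine Finset.sum_congr rfl fun s hs => ?_
  rw [← card_filter_diffCoords_eq x s, Finset.filter_filter]
  congr 1
  exact Finset.filter_congr fun _ _ =>
    ⟨And.right, fun h => ⟨mem_lambdaBall.2 (h ▸ hs), h⟩⟩

end Counting

theorem lambda_ball_columns_linearIndependent_general
    (n : ℕ) (q : Fin n → ℕ)
    (Λ : Finset (Finset (Fin n))) (hempty : ∅ ∈ Λ)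
    (hΛ : ∀ s ∈ Λ, ∀ t ⊆ s, t ∈ Λ)
    (a : ℕ) (A : Matrix (Fin a) (∀ i, Fin (q i)) ℝ)
    (hA : Submodule.span ℝ (Set.range A) = VLam n q Λ)
    (x : ∀ i, Fin (q i))
    (K : Set (∀ i, Fin (q i)))
    (hK : K = {x' | Finset.univ.filter (fun i => x' i ≠ x i) ∈ Λ}) :
    LinearIndependent ℝ (fun x' : K => fun i => A i x') ∧
    Module.finrank ℝ (Submodule.span ℝ ((fun x' => fun i => A i x') '' K)) = Nat.card K ∧
    Nat.card K = 1 + ∑ s ∈ Λ.erase ∅, ∏ i ∈ s, (q i - 1) ∧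
    Nat.card K = Module.finrank ℝ (VLam n q Λ) := by
  have hK' : K = lambdaBall x Λ := hK
  subst hK'
  have hV : VLam n q Λ = lambdaSpan ℝ Λ := rfl
  have hcols := linearIndependent_columns_of_span_rows_eq (hA.trans hV) x
  refine ⟨hcols, ?_, ?_, ?_⟩
  · rw [Set.image_eq_range, finrank_span_eq_card hcols, Nat.card_eq_fintype_card]
  · rw [card_lambdaBall, ← Finset.add_sum_erase Λ _ hempty]
    simp
  · rw [hV, finrank_lambdaSpan x hΛ]

/-- If the rows of `A` span `V_Λ(X)`, then for every `x` the columns of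
`A` indexed by the `Λ`-ball `K(x,Λ) = {x' : {i : x'_i ≠ x_i} ∈ Λ}` are linearly
independent; in particular `rank(A_{K(x,Λ)}) = |K(x,Λ)| = 1 + ∑_{λ∈Λ∖{∅}} ∏_{i∈λ}(|X_i|−1)
= dim V_Λ(X)`. -/
theorem lambda_ball_columns_linearIndependent
    (n : ℕ) (q : Fin n → ℕ) (hq : ∀ i, 2 ≤ q i)
    (Λ : Finset (Finset (Fin n))) (hempty : ∅ ∈ Λ)
    (hΛ : ∀ s ∈ Λ, ∀ t ⊆ s, t ∈ Λ)
    (a : ℕ) (A : Matrix (Fin a) (∀ i, Fin (q i)) ℝ)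
    (hA : Submodule.span ℝ (Set.range A) = VLam n q Λ)
    (x : ∀ i, Fin (q i))
    (K : Set (∀ i, Fin (q i)))
    (hK : K = {x' | Finset.univ.filter (fun i => x' i ≠ x i) ∈ Λ}) :
    LinearIndependent ℝ (fun x' : K => fun i => A i x') ∧
    Module.finrank ℝ (Submodule.span ℝ ((fun x' => fun i => A i x') '' K)) = Nat.card K ∧
    Nat.card K = 1 + ∑ s ∈ Λ.erase ∅, ∏ i ∈ s, (q i - 1) ∧
    Nat.card K = Module.finrank ℝ (VLam n q Λ) :=
  lambda_ball_columns_linearIndependent_general n q Λ hempty hΛ a A hA x K hK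
end

section
/- Let X and Y be finite nonempty sets, let A ∈ ℝ^{a×X} be a matrix whose row span contains the all-ones vector, and let B ∈ ℝ^{b×Y} be a matrix with row span ℝ^Y. Then the Kronecker product model M_{A⊗B} equals the |Y|-mixture of E_A, i.e., M_{A⊗B} = { ∑_{i=1}^{|Y|} α_i p^{(i)} : p^{(1)},…,p^{(|Y|)} ∈ E_A, α_1,…,α_{|Y|} ≥ 0, ∑_i α_i = 1 }. -/
open scoped Classical BigOperators

/-- If the row span of `A` contains the all-ones vector and `B` has row
span `ℝ^Y`, then the Kronecker product model `M_{A⊗B}` (the marginal on `X` of the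
exponential family with sufficient statistics `F(x,y) = A_x ⊗ B_y`) equals the
`|Y|`-mixture of the exponential family `E_A`. -/
theorem kronecker_model_eq_mixture
    {X Y : Type*} [Fintype X] [Fintype Y] [Nonempty X] [Nonempty Y]
    {a b : ℕ} (A : Matrix (Fin a) X ℝ) (B : Matrix (Fin b) Y ℝ)
    (hA : (fun _ => (1 : ℝ)) ∈ Submodule.span ℝ (Set.range A))
    (hB : Submodule.span ℝ (Set.range B) = (⊤ : Submodule ℝ (Y → ℝ))) :
    {p : X → ℝ | ∃ θ : Fin a × Fin b → ℝ,
      p = fun x =>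
        (∑ y : Y, Real.exp (∑ ij : Fin a × Fin b, θ ij * (A ij.1 x * B ij.2 y))) /
          ∑ x' : X, ∑ y' : Y,
            Real.exp (∑ ij : Fin a × Fin b, θ ij * (A ij.1 x' * B ij.2 y'))}
    =
    {p : X → ℝ | ∃ (α : Y → ℝ) (ps : Y → X → ℝ),
      (∀ y, 0 ≤ α y) ∧ (∑ y : Y, α y) = 1 ∧
      (∀ y, ∃ η : Fin a → ℝ, ps y = fun x =>
        Real.exp (∑ i, η i * A i x) / ∑ x' : X, Real.exp (∑ i, η i * A i x')) ∧
      p = fun x => ∑ y : Y, α y * ps y x} := by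
  classical
  have sumexp_pos : ∀ (f : X → ℝ), 0 < ∑ x : X, Real.exp (f x) := fun f =>
    Finset.sum_pos (fun x _ => Real.exp_pos _) Finset.univ_nonempty
  ext p
  simp only [Set.mem_setOf_eq]
  constructor
  · rintro ⟨θ, rfl⟩
    set η : Y → Fin a → ℝ := fun y i => ∑ j : Fin b, θ (i, j) * B j y with hηdef
    have hS : ∀ (x : X) (y : Y),
        (∑ ij : Fin a × Fin b, θ ij * (A ij.1 x * B ij.2 y)) = ∑ i, η y i * A i x := by
      intro x y
      rw [Fintype.sum_prod_type]
      refine Finset.sum_congr rfl fun i _ => ?_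
      show (∑ j, θ (i, j) * (A i x * B j y)) = (∑ j, θ (i, j) * B j y) * A i x
      rw [Finset.sum_mul]
      exact Finset.sum_congr rfl fun j _ => by ring
    have hZypos : ∀ y : Y, 0 < ∑ x : X, Real.exp (∑ i, η y i * A i x) := fun y =>
      sumexp_pos _
    set Z : ℝ := ∑ x' : X, ∑ y' : Y,
        Real.exp (∑ ij : Fin a × Fin b, θ ij * (A ij.1 x' * B ij.2 y')) with hZ
    have hZeq : Z = ∑ y : Y, ∑ x : X, Real.exp (∑ i, η y i * A i x) := by
      rw [hZ, Finset.sum_comm]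
      exact Finset.sum_congr rfl fun y _ => Finset.sum_congr rfl fun x _ => by rw [hS]
    have hZpos : 0 < Z := by
      rw [hZeq]
      exact Finset.sum_pos (fun y _ => hZypos y) Finset.univ_nonempty
    refine ⟨fun y => (∑ x : X, Real.exp (∑ i, η y i * A i x)) / Z,
      fun y x => Real.exp (∑ i, η y i * A i x) / ∑ x' : X, Real.exp (∑ i, η y i * A i x'),
      fun y => div_nonneg (hZypos y).le hZpos.le, ?_, fun y => ⟨η y, rfl⟩, ?_⟩
    · rw [← Finset.sum_div, ← hZeq, div_self hZpos.ne']
    · funext x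
      rw [Finset.sum_div]
      refine Finset.sum_congr rfl fun y _ => ?_
      dsimp only
      rw [hS]
      have h1 : (∑ x' : X, Real.exp (∑ i, η y i * A i x')) ≠ 0 := (hZypos y).ne'
      field_simp
  · rintro ⟨α, ps, h0, h1, hE, rfl⟩
    choose η hη using hE
    obtain ⟨c, hc⟩ := (Submodule.mem_span_range_iff_exists_fun ℝ).mp hA
    have hc' : ∀ x, (∑ i, c i * A i x) = 1 := by
      intro x
      have := congrFun hc x
      simpa using this
    have hZypos : ∀ y : Y, 0 < ∑ x : X, Real.exp (∑ i, η y i * A i x) := fun y =>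
      sumexp_pos _
    obtain ⟨y₀, hy₀⟩ : ∃ y, 0 < α y := by
      by_contra h
      push_neg at h
      have hz : ∀ y, α y = 0 := fun y => le_antisymm (h y) (h0 y)
      rw [Finset.sum_congr rfl fun y _ => hz y, Finset.sum_const, smul_zero] at h1
      exact one_ne_zero h1.symm
    set P : Y → Prop := fun y => 0 < α y ∧ y ≠ y₀ with hP
    set m : ℕ := (Finset.univ.filter fun y => ¬ P y).card with hm
    have hmpos : 0 < m := by
      rw [hm]
      refine Finset.card_pos.mpr ⟨y₀, ?_⟩
      simp [hP]
    have hmR : (0 : ℝ) < (m : ℝ) := by exact_mod_cast hmpos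
    set Z0 : ℝ := ∑ x : X, Real.exp (∑ i, η y₀ i * A i x) with hZ0
    set s : ℝ := α y₀ / (m * Z0) with hs
    have hspos : 0 < s := div_pos hy₀ (mul_pos hmR (hZypos y₀))
    set γ : Y → ℝ := fun y => if P y then α y / (∑ x : X, Real.exp (∑ i, η y i * A i x)) else s
      with hγ
    have hγpos : ∀ y, 0 < γ y := by
      intro y
      simp only [hγ]
      by_cases h : P y
      · rw [if_pos h]
        have h' : 0 < α y := by
          have h2 := h
          simp only [hP] at h2
          exact h2.1
        exact div_pos h' (hZypos y)
      · rw [if_neg h]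
        exact hspos
    set μ : Y → Fin a → ℝ := fun y => if P y then η y else η y₀ with hμ
    have key : ∀ x, (∑ y, γ y * Real.exp (∑ i, μ y i * A i x)) = ∑ y, α y * ps y x := by
      intro x
      rw [← Finset.sum_filter_add_sum_filter_not Finset.univ P
        (fun y => γ y * Real.exp (∑ i, μ y i * A i x)),
        ← Finset.sum_filter_add_sum_filter_not Finset.univ P (fun y => α y * ps y x)]
      congr 1
      · refine Finset.sum_congr rfl fun y hy => ?_
        rw [Finset.mem_filter] at hy
        have hγy : γ y = α y / (∑ x : X, Real.exp (∑ i, η y i * A i x)) := by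
          simp only [hγ]
          rw [if_pos hy.2]
        have hμy : μ y = η y := by
          simp only [hμ]
          rw [if_pos hy.2]
        rw [hγy, hμy, congrFun (hη y) x]
        rw [div_mul_eq_mul_div, mul_div_assoc]
      · have e1 : ∀ y ∈ Finset.univ.filter (fun y => ¬ P y),
            γ y * Real.exp (∑ i, μ y i * A i x)
              = s * Real.exp (∑ i, η y₀ i * A i x) := by
          intro y hy
          rw [Finset.mem_filter] at hy
          have hγy : γ y = s := by
            simp only [hγ]
            rw [if_neg hy.2]
          have hμy : μ y = η y₀ := by
            simp only [hμ]
            rw [if_neg hy.2]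
          rw [hγy, hμy]
        have hmem : y₀ ∈ Finset.univ.filter (fun y => ¬ P y) :=
          Finset.mem_filter.mpr ⟨Finset.mem_univ _, by
            simp only [hP]
            exact fun h => h.2 rfl⟩
        have lhs : (∑ y ∈ Finset.univ.filter (fun y => ¬ P y),
            γ y * Real.exp (∑ i, μ y i * A i x))
            = m * (s * Real.exp (∑ i, η y₀ i * A i x)) := by
          rw [Finset.sum_congr rfl e1, Finset.sum_const, nsmul_eq_mul, hm]
        have rhs : (∑ y ∈ Finset.univ.filter (fun y => ¬ P y), α y * ps y x)
            = α y₀ * ps y₀ x := by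
          refine Finset.sum_eq_single_of_mem y₀ hmem fun y hy hne => ?_
          rw [Finset.mem_filter] at hy
          have hz : α y = 0 := by
            by_contra hz
            have hPy : P y := by
              simp only [hP]
              exact ⟨lt_of_le_of_ne (h0 y) (Ne.symm hz), hne⟩
            exact hy.2 hPy
          rw [hz, zero_mul]
        rw [lhs, rhs, congrFun (hη y₀) x, hs, ← hZ0]
        have hmne : (m : ℝ) ≠ 0 := hmR.ne'
        rw [div_mul_eq_mul_div, mul_div_assoc', mul_div_mul_left _ _ hmne, mul_div_assoc]
    have hθ : ∀ i : Fin a, ∃ d : Fin b → ℝ,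
        ∀ y, (∑ j, d j * B j y) = μ y i + Real.log (γ y) * c i := by
      intro i
      have hmem : (fun y => μ y i + Real.log (γ y) * c i) ∈ Submodule.span ℝ (Set.range B) := by
        rw [hB]; trivial
      obtain ⟨d, hd⟩ := (Submodule.mem_span_range_iff_exists_fun ℝ).mp hmem
      exact ⟨d, fun y => by simpa using congrFun hd y⟩
    choose d hd using hθ
    refine ⟨fun ij => d ij.1 ij.2, ?_⟩
    have hS : ∀ (x : X) (y : Y),
        (∑ ij : Fin a × Fin b, (fun ij : Fin a × Fin b => d ij.1 ij.2) ij
          * (A ij.1 x * B ij.2 y))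
        = (∑ i, μ y i * A i x) + Real.log (γ y) := by
      intro x y
      rw [Fintype.sum_prod_type]
      have step1 : ∀ i : Fin a, (∑ j, d i j * (A i x * B j y))
          = (μ y i + Real.log (γ y) * c i) * A i x := by
        intro i
        rw [← hd i y, Finset.sum_mul]
        exact Finset.sum_congr rfl fun j _ => by ring
      rw [Finset.sum_congr rfl (fun i _ => step1 i)]
      have step2 : (∑ i, (μ y i + Real.log (γ y) * c i) * A i x)
          = (∑ i, μ y i * A i x) + Real.log (γ y) * ∑ i, c i * A i x := by
        rw [Finset.mul_sum, ← Finset.sum_add_distrib]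
        exact Finset.sum_congr rfl fun i _ => by ring
      rw [step2, hc' x, mul_one]
    have hexp : ∀ (x : X) (y : Y),
        Real.exp ((∑ i, μ y i * A i x) + Real.log (γ y))
          = γ y * Real.exp (∑ i, μ y i * A i x) := by
      intro x y
      rw [Real.exp_add, Real.exp_log (hγpos y), mul_comm]
    have hnum : ∀ x, (∑ y : Y, Real.exp (∑ ij : Fin a × Fin b,
        (fun ij : Fin a × Fin b => d ij.1 ij.2) ij * (A ij.1 x * B ij.2 y)))
        = ∑ y, α y * ps y x := by
      intro x
      rw [Finset.sum_congr rfl fun y _ => by rw [hS x y, hexp x y]]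
      exact key x
    have hsum1 : ∀ y, (∑ x : X, ps y x) = 1 := by
      intro y
      rw [Finset.sum_congr rfl fun x _ => congrFun (hη y) x, ← Finset.sum_div,
        div_self (hZypos y).ne']
    have hden : (∑ x' : X, ∑ y' : Y, Real.exp (∑ ij : Fin a × Fin b,
        (fun ij : Fin a × Fin b => d ij.1 ij.2) ij * (A ij.1 x' * B ij.2 y'))) = 1 := by
      rw [Finset.sum_congr rfl fun x _ => hnum x, Finset.sum_comm]
      rw [Finset.sum_congr rfl fun y (_ : y ∈ Finset.univ) => by
        rw [← Finset.mul_sum, hsum1 y, mul_one]]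
      exact h1
    funext x
    rw [hnum x, hden, div_one]
end

section
/- Let X = X₁ × ⋯ × X_n with |X_i| ≥ 2, let 1 ≤ k ≤ n, and let A ∈ ℝ^{a×X} be a matrix whose rows span V_k(X). Let Y be a finite set and let c_y ∈ X, y ∈ Y, be points such that the radius-k Hamming balls K(c_y,Λ_k), y ∈ Y, are pairwise disjoint. Then there exists a family of vectors (v_y)_{y∈Y} in ℝ^a such that for every y ∈ Y and every x ∈ K(c_y,Λ_k), ⟨A_x, v_y⟩ > ⟨A_x, v_{y'}⟩ for all y' ∈ Y∖{y}; that is, the slicing induced by (v_y)_{y∈Y} satisfies C_y ⊇ K(c_y,Λ_k) for all y ∈ Y. -/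
open scoped Classical BigOperators

/-- `V_k(X)`: the span of all functions on `X = ∏ i, X_i` depending on at most `k`
coordinates. -/
noncomputable def Vk (n : ℕ) (q : Fin n → ℕ) (k : ℕ) :
    Submodule ℝ ((∀ i, Fin (q i)) → ℝ) :=
  Submodule.span ℝ
    {f : (∀ i, Fin (q i)) → ℝ | ∃ s : Finset (Fin n), s.card ≤ k ∧
      ∀ x x' : ∀ i, Fin (q i), (∀ i ∈ s, x i = x' i) → f x = f x'}

/-! The function `x ↦ -d_H(x, c)` lies in `V_1(X) ⊆ V_k(X)`, being a sum of functions of one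
coordinate each, so it is `⟨A_x, v⟩` for some `v`. With `v_y` chosen this way for the centre
`c_y`, the inequality `⟨A_x, v_y⟩ > ⟨A_x, v_{y'}⟩` says `d_H(x, c_y) < d_H(x, c_{y'})`, which
holds on `K(c_y, Λ_k)` because that ball misses `K(c_{y'}, Λ_k)`. -/

theorem hammingDist_mem_Vk {n : ℕ} {q : Fin n → ℕ} {k : ℕ} (hk : 1 ≤ k)
    (c : ∀ i, Fin (q i)) : (fun x => (hammingDist x c : ℝ)) ∈ Vk n q k := by
  have hsum : (fun x => (hammingDist x c : ℝ)) =
      ∑ j, fun x : ∀ i, Fin (q i) => if x j ≠ c j then (1 : ℝ) else 0 := by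
    funext x
    simp only [hammingDist, Finset.natCast_card_filter, Finset.sum_apply]
  rw [hsum]
  refine Submodule.sum_mem _ fun j _ => Submodule.subset_span ⟨{j}, by simpa using hk, ?_⟩
  intro x x' hxx'
  simp only [hxx' j (Finset.mem_singleton_self j)]

theorem slicing_containing_hamming_balls_general
    (n : ℕ) (q : Fin n → ℕ)
    (k : ℕ) (hk1 : 1 ≤ k)
    (a : ℕ) (A : Matrix (Fin a) (∀ i, Fin (q i)) ℝ)
    (hA : Submodule.span ℝ (Set.range A) = Vk n q k)
    {Y : Type*}
    (c : Y → ∀ i, Fin (q i))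
    (hdisj : ∀ y y', y ≠ y' →
      ∀ x, ¬(hammingDist x (c y) ≤ k ∧ hammingDist x (c y') ≤ k)) :
    ∃ v : Y → Fin a → ℝ, ∀ y : Y, ∀ x : ∀ i, Fin (q i), hammingDist x (c y) ≤ k →
      ∀ y', y' ≠ y → ∑ i, A i x * v y' i < ∑ i, A i x * v y i := by
  have hrow : ∀ y, ∃ w : Fin a → ℝ, ∑ i, w i • A i = fun x => -(hammingDist x (c y) : ℝ) :=
    fun y => (Submodule.mem_span_range_iff_exists_fun ℝ).mp
      (hA ▸ Submodule.neg_mem _ (hammingDist_mem_Vk hk1 (c y)))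
  choose v hv using hrow
  refine ⟨v, fun y x hx y' hy' => ?_⟩
  have hval : ∀ z, ∑ i, A i x * v z i = -(hammingDist x (c z) : ℝ) := fun z => by
    simpa [Finset.sum_apply, mul_comm] using congrFun (hv z) x
  have hfar : k < hammingDist x (c y') := not_le.mp fun h => hdisj y' y hy' x ⟨h, hx⟩
  rw [hval, hval, neg_lt_neg_iff]
  exact_mod_cast hx.trans_lt hfar

/-- If the rows of `A` span `V_k(X)` and `K(c_y, Λ_k)`, `y ∈ Y`, are
pairwise disjoint radius-`k` Hamming balls in `X`, then there is a family of vectors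
`(v_y)` such that for each `y` and each `x ∈ K(c_y,Λ_k)` we have
`⟨A_x, v_y⟩ > ⟨A_x, v_{y'}⟩` for all `y' ≠ y`; i.e. the induced slicing satisfies
`C_y ⊇ K(c_y,Λ_k)` for all `y`. -/
theorem slicing_containing_hamming_balls
    (n : ℕ) (q : Fin n → ℕ) (hq : ∀ i, 2 ≤ q i)
    (k : ℕ) (hk1 : 1 ≤ k) (hkn : k ≤ n)
    (a : ℕ) (A : Matrix (Fin a) (∀ i, Fin (q i)) ℝ)
    (hA : Submodule.span ℝ (Set.range A) = Vk n q k)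
    {Y : Type*} [Fintype Y]
    (c : Y → ∀ i, Fin (q i))
    (hdisj : ∀ y y', y ≠ y' →
      ∀ x, ¬(hammingDist x (c y) ≤ k ∧ hammingDist x (c y') ≤ k)) :
    ∃ v : Y → Fin a → ℝ, ∀ y : Y, ∀ x : ∀ i, Fin (q i), hammingDist x (c y) ≤ k →
      ∀ y', y' ≠ y → ∑ i, A i x * v y' i < ∑ i, A i x * v y i :=
  slicing_containing_hamming_balls_general n q k hk1 a A hA c hdisj
end

section
/- Let X be a finite nonempty set and A ∈ ℝ^{a×X}. Let Y = Y₁ × ⋯ × Y_m be a product of finite nonempty sets, let B^j ∈ ℝ^{b_j×Y_j} for j ∈ [m], and let B ∈ ℝ^{(b₁+⋯+b_m)×Y} be the matrix whose column indexed by y = (y₁,…,y_m) is the vertical concatenation (B¹_{y₁}; … ; Bᵐ_{y_m}). Then M_{A⊗B} = M_{A⊗B¹} ∗ ⋯ ∗ M_{A⊗Bᵐ}, the Hadamard product of the marginal models for the individual hidden variables. -/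
/-!
The sufficient statistic `A_x ⊗ B_y` splits along the row blocks of `B`, so
`exp ⟨θ, A_x ⊗ B_y⟩ = ∏ⱼ exp ⟨θⱼ, A_x ⊗ Bʲ_{yⱼ}⟩`, where `θⱼ` is the block of `θ` paired with the
rows of `Bʲ`. Summing over `y = (y₁, …, yₘ)` turns the sum of products into a product of sums: the
unnormalized marginal of `M_{A⊗B}` at `θ` is the product of those of the `M_{A⊗Bʲ}` at the `θⱼ`.
Normalization commutes with pointwise products, and `θ ↦ (θⱼ)ⱼ` is a bijection.
-/

namespace KroneckerModel

open Finset

section Normalize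

variable {X : Type*} [Fintype X]

noncomputable def normalize (f : X → ℝ) : X → ℝ := fun x => f x / ∑ x', f x'

lemma normalize_const_mul {c : ℝ} (hc : c ≠ 0) (f : X → ℝ) :
    normalize (fun x => c * f x) = normalize f := by
  funext x
  simp only [normalize, ← mul_sum, mul_div_mul_left _ _ hc]

lemma normalize_zero : normalize (0 : X → ℝ) = 0 := by
  funext x
  simp [normalize]

/-- Nonnegativity handles a factor of total mass zero: that factor is then identically zero, and
both sides vanish. -/
lemma normalize_prod_normalize {J : Type*} [Fintype J] {f : J → X → ℝ}
    (hf : ∀ j x, 0 ≤ f j x) :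
    normalize (fun x => ∏ j, normalize (f j) x) = normalize (fun x => ∏ j, f j x) := by
  by_cases hmass : ∀ j, ∑ x, f j x ≠ 0
  · have hprod : (fun x => ∏ j, normalize (f j) x) =
        fun x => (∏ j, ∑ x', f j x')⁻¹ * ∏ j, f j x := by
      funext x
      simp only [normalize, div_eq_inv_mul, prod_mul_distrib, prod_inv_distrib]
    rw [hprod, normalize_const_mul (inv_ne_zero (prod_ne_zero_iff.mpr fun j _ => hmass j))]
  · push Not at hmass
    obtain ⟨j, hj⟩ := hmass
    have hfj : f j = 0 := funext fun x =>
      (sum_eq_zero_iff_of_nonneg fun x _ => hf j x).mp hj x (mem_univ x)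
    have hvanish : ∀ g : J → X → ℝ, g j = 0 → (fun x => ∏ j, g j x) = 0 := fun g hg =>
      funext fun x => prod_eq_zero (mem_univ j) (congrFun hg x)
    rw [hvanish f hfj, hvanish _ (by rw [hfj, normalize_zero])]

end Normalize

variable {X ι : Type*} [Fintype ι]

noncomputable def weight {κ Y : Type*} [Fintype κ] [Fintype Y] (A : Matrix ι X ℝ)
    (B : Matrix κ Y ℝ) (θ : ι × κ → ℝ) (x : X) : ℝ :=
  ∑ y, Real.exp (∑ r, θ r * (A r.1 x * B r.2 y))

lemma weight_nonneg {κ Y : Type*} [Fintype κ] [Fintype Y] (A : Matrix ι X ℝ) (B : Matrix κ Y ℝ)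
    (θ : ι × κ → ℝ) (x : X) : 0 ≤ weight A B θ x :=
  sum_nonneg fun _ _ => Real.exp_nonneg _

/-- `M_{A⊗B}`, with the coordinates of `θ` indexed by the rows `(i, k)` of `A ⊗ B`. -/
def model [Fintype X] {κ Y : Type*} [Fintype κ] [Fintype Y] (A : Matrix ι X ℝ)
    (B : Matrix κ Y ℝ) : Set (X → ℝ) :=
  {p | ∃ θ, p = normalize (weight A B θ)}

def hadamardProduct [Fintype X] {J : Type*} [Fintype J] (M : J → Set (X → ℝ)) : Set (X → ℝ) :=
  {p | ∃ q : J → X → ℝ, (∀ j, q j ∈ M j) ∧ p = normalize fun x => ∏ j, q j x}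

variable {J : Type*} {κ Y : J → Type*}

def stack (B : ∀ j, Matrix (κ j) (Y j) ℝ) : Matrix (Σ j, κ j) (∀ j, Y j) ℝ :=
  fun r y => B r.1 r.2 (y r.1)

variable [Fintype J] [∀ j, Fintype (κ j)]

lemma sum_prod_sigma {M : Type*} [AddCommMonoid M] (g : ι × (Σ j, κ j) → M) :
    ∑ r, g r = ∑ j, ∑ r : ι × κ j, g (r.1, ⟨j, r.2⟩) := by
  rw [Fintype.sum_prod_type, sum_comm, Fintype.sum_sigma]
  refine sum_congr rfl fun j _ => ?_
  rw [Fintype.sum_prod_type]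
  exact sum_comm

variable [DecidableEq J] [∀ j, Fintype (Y j)]

lemma weight_stack (A : Matrix ι X ℝ) (B : ∀ j, Matrix (κ j) (Y j) ℝ)
    (θ : ι × (Σ j, κ j) → ℝ) (x : X) :
    weight A (stack B) θ x = ∏ j, weight A (B j) (fun r => θ (r.1, ⟨j, r.2⟩)) x := by
  simp only [weight, Fintype.prod_sum, ← Real.exp_sum]
  exact sum_congr rfl fun y _ => by rw [sum_prod_sigma]; rfl

theorem model_stack [Fintype X] (A : Matrix ι X ℝ) (B : ∀ j, Matrix (κ j) (Y j) ℝ) :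
    model A (stack B) = hadamardProduct fun j => model A (B j) := by
  ext p
  constructor
  · rintro ⟨θ, rfl⟩
    refine ⟨fun j => normalize (weight A (B j) fun r => θ (r.1, ⟨j, r.2⟩)),
      fun j => ⟨_, rfl⟩, ?_⟩
    rw [normalize_prod_normalize fun j => weight_nonneg _ _ _]
    exact congrArg normalize (funext (weight_stack A B θ))
  · rintro ⟨q, hq, rfl⟩
    choose θ hθ using hq
    obtain rfl : q = fun j => normalize (weight A (B j) (θ j)) := funext hθ
    let θ' : ι × (Σ j, κ j) → ℝ := fun r => θ r.2.1 (r.1, r.2.2)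
    refine ⟨θ', ?_⟩
    rw [normalize_prod_normalize fun j => weight_nonneg _ _ _]
    exact congrArg normalize (funext fun x => (weight_stack A B θ' x).symm)

end KroneckerModel

theorem kronecker_model_eq_hadamard_product_general
    {X : Type*} [Fintype X] {a : ℕ} (A : Matrix (Fin a) X ℝ)
    (m : ℕ) (Yj : Fin m → Type*) [∀ j, Fintype (Yj j)]
    (b : Fin m → ℕ) (Bj : ∀ j : Fin m, Matrix (Fin (b j)) (Yj j) ℝ)
    (B : Matrix ((j : Fin m) × Fin (b j)) (∀ j, Yj j) ℝ)
    (hB : ∀ (j : Fin m) (i : Fin (b j)) (y : ∀ j, Yj j), B ⟨j, i⟩ y = Bj j i (y j)) :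
    {p : X → ℝ | ∃ θ : Fin a × ((j : Fin m) × Fin (b j)) → ℝ,
      p = fun x =>
        (∑ y : ∀ j, Yj j,
          Real.exp (∑ r : Fin a × ((j : Fin m) × Fin (b j)),
            θ r * (A r.1 x * B r.2 y))) /
        ∑ x' : X, ∑ y : ∀ j, Yj j,
          Real.exp (∑ r : Fin a × ((j : Fin m) × Fin (b j)),
            θ r * (A r.1 x' * B r.2 y))}
    =
    {p : X → ℝ | ∃ qf : Fin m → X → ℝ,
      (∀ j : Fin m, ∃ θj : Fin a × Fin (b j) → ℝ,
        qf j = fun x =>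
          (∑ yj : Yj j,
            Real.exp (∑ r : Fin a × Fin (b j), θj r * (A r.1 x * Bj j r.2 yj))) /
          ∑ x' : X, ∑ yj : Yj j,
            Real.exp (∑ r : Fin a × Fin (b j), θj r * (A r.1 x' * Bj j r.2 yj))) ∧
      p = fun x => (∏ j : Fin m, qf j x) / ∑ x' : X, ∏ j : Fin m, qf j x'} := by
  obtain rfl : B = KroneckerModel.stack Bj := funext fun r => funext (hB r.1 r.2)
  exact KroneckerModel.model_stack A Bj

/-- For hidden variables `Y = Y₁ × ⋯ × Y_m` with independent sufficient
statistics (the column of `B` at `y` is the concatenation `(B¹_{y₁};…;Bᵐ_{y_m})`), the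
Kronecker product model `M_{A⊗B}` equals the Hadamard product of the marginal models
`M_{A⊗B^j}`, `j ∈ [m]`. -/
theorem kronecker_model_eq_hadamard_product
    {X : Type*} [Fintype X] [Nonempty X] {a : ℕ} (A : Matrix (Fin a) X ℝ)
    (m : ℕ) (Yj : Fin m → Type*) [∀ j, Fintype (Yj j)] [∀ j, Nonempty (Yj j)]
    (b : Fin m → ℕ) (Bj : ∀ j : Fin m, Matrix (Fin (b j)) (Yj j) ℝ)
    (B : Matrix ((j : Fin m) × Fin (b j)) (∀ j, Yj j) ℝ)
    (hB : ∀ (j : Fin m) (i : Fin (b j)) (y : ∀ j, Yj j), B ⟨j, i⟩ y = Bj j i (y j)) :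
    {p : X → ℝ | ∃ θ : Fin a × ((j : Fin m) × Fin (b j)) → ℝ,
      p = fun x =>
        (∑ y : ∀ j, Yj j,
          Real.exp (∑ r : Fin a × ((j : Fin m) × Fin (b j)),
            θ r * (A r.1 x * B r.2 y))) /
        ∑ x' : X, ∑ y : ∀ j, Yj j,
          Real.exp (∑ r : Fin a × ((j : Fin m) × Fin (b j)),
            θ r * (A r.1 x' * B r.2 y))}
    =
    {p : X → ℝ | ∃ qf : Fin m → X → ℝ,
      (∀ j : Fin m, ∃ θj : Fin a × Fin (b j) → ℝ,
        qf j = fun x =>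
          (∑ yj : Yj j,
            Real.exp (∑ r : Fin a × Fin (b j), θj r * (A r.1 x * Bj j r.2 yj))) /
          ∑ x' : X, ∑ yj : Yj j,
            Real.exp (∑ r : Fin a × Fin (b j), θj r * (A r.1 x' * Bj j r.2 yj))) ∧
      p = fun x => (∏ j : Fin m, qf j x) / ∑ x' : X, ∏ j : Fin m, qf j x'} :=
  kronecker_model_eq_hadamard_product_general A m Yj b Bj B hB
end

section
/- Let X be a finite nonempty set and A ∈ ℝ^{a×X} with columns A_x. Suppose u₁,…,u_N ∈ ℝ^a are such that the sets C_i = {x ∈ X : ⟨A_x, u_i⟩ > ⟨A_x, u_j⟩ for all j ≠ i}, i ∈ [N], partition X, and suppose w₁, w₂ ∈ ℝ^a are such that the sets D₁ = {x : ⟨A_x, w₁⟩ > ⟨A_x, w₂⟩} and D₂ = {x : ⟨A_x, w₂⟩ > ⟨A_x, w₁⟩} partition X. Then there exist v₁,…,v_{N+1} ∈ ℝ^a such that the induced sets E_i = {x ∈ X : ⟨A_x, v_i⟩ > ⟨A_x, v_j⟩ for all j ≠ i} satisfy E_i = D₂ ∩ C_i for i = 1,…,N and E_{N+1} = D₁.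 -/
open scoped Classical BigOperators

/-- truncated slicings.  If `u₁,…,u_N` induce a slicing
`C₁,…,C_N` partitioning `X` and `w₁,w₂` induce a two-block slicing `D₁,D₂`
partitioning `X`, then there are `v₁,…,v_{N+1}` whose induced slicing `E₁,…,E_{N+1}`
satisfies `E_i = D₂ ∩ C_i` for `i ≤ N` and `E_{N+1} = D₁`. -/
theorem truncated_slicing
    {X : Type*} [Fintype X] [Nonempty X] {a N : ℕ}
    (A : Matrix (Fin a) X ℝ)
    (u : Fin N → Fin a → ℝ)
    (C : Fin N → Set X)
    (hC : ∀ i, C i =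
      {x | ∀ j, j ≠ i → ∑ t, A t x * u j t < ∑ t, A t x * u i t})
    (hCcov : ∀ x, ∃ i, x ∈ C i)
    (w₁ w₂ : Fin a → ℝ)
    (D₁ D₂ : Set X)
    (hD₁ : D₁ = {x | ∑ t, A t x * w₂ t < ∑ t, A t x * w₁ t})
    (hD₂ : D₂ = {x | ∑ t, A t x * w₁ t < ∑ t, A t x * w₂ t})
    (hDcov : ∀ x, x ∈ D₁ ∨ x ∈ D₂) :
    ∃ v : Fin (N + 1) → Fin a → ℝ,
      (∀ i : Fin N,
        {x | ∀ j, j ≠ i.castSucc → ∑ t, A t x * v j t < ∑ t, A t x * v i.castSucc t}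
          = D₂ ∩ C i) ∧
      {x | ∀ j, j ≠ Fin.last N → ∑ t, A t x * v j t < ∑ t, A t x * v (Fin.last N) t}
        = D₁ := by
  classical
  have hdich : ∀ x : X, (∑ t, A t x * w₂ t) < (∑ t, A t x * w₁ t) ∨
      (∑ t, A t x * w₁ t) < (∑ t, A t x * w₂ t) := by
    intro x
    rcases hDcov x with h | h
    · left; rw [hD₁] at h; exact h
    · right; rw [hD₂] at h; exact h
  have hSnn : ∀ x : X, (0 : ℝ) ≤ ∑ j, |∑ t, A t x * u j t| :=
    fun x => Finset.sum_nonneg fun j _ => abs_nonneg _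
  have hXne : (Finset.univ : Finset X).Nonempty := Finset.univ_nonempty
  set ε : ℝ := Finset.univ.inf' hXne
      (fun x => |(∑ t, A t x * w₁ t) - ∑ t, A t x * w₂ t| /
        ((∑ j, |∑ t, A t x * u j t|) + 1)) with hεdef
  have hεpos : 0 < ε := by
    rw [hεdef, Finset.lt_inf'_iff]
    intro x _
    apply div_pos
    · apply abs_pos.2
      rcases hdich x with h | h
      · exact sub_ne_zero.2 h.ne'
      · exact sub_ne_zero.2 h.ne
    · linarith [hSnn x]
  have hbound : ∀ (x : X) (i : Fin N),
      |ε * ∑ t, A t x * u i t| < |(∑ t, A t x * w₁ t) - ∑ t, A t x * w₂ t| := by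
    intro x i
    have h1 : |∑ t, A t x * u i t| ≤ ∑ j, |∑ t, A t x * u j t| :=
      Finset.single_le_sum (f := fun j => |∑ t, A t x * u j t|) (fun j _ => abs_nonneg _) (Finset.mem_univ i)
    have h2 : ε ≤ |(∑ t, A t x * w₁ t) - ∑ t, A t x * w₂ t| /
        ((∑ j, |∑ t, A t x * u j t|) + 1) := by
      rw [hεdef]; exact Finset.inf'_le _ (Finset.mem_univ x)
    rw [le_div_iff₀ (by linarith [hSnn x])] at h2
    rw [abs_mul, abs_of_pos hεpos]
    nlinarith [mul_le_mul_of_nonneg_left h1 hεpos.le, hεpos]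
  set v : Fin (N + 1) → Fin a → ℝ := Fin.snoc (fun i t => w₂ t + ε * u i t) w₁ with hv
  have hlast : ∀ x : X, ∑ t, A t x * v (Fin.last N) t = ∑ t, A t x * w₁ t := by
    intro x; simp [hv, Fin.snoc_last]
  have hcast : ∀ (i : Fin N) (x : X),
      ∑ t, A t x * v i.castSucc t = (∑ t, A t x * w₂ t) + ε * ∑ t, A t x * u i t := by
    intro i x
    simp only [hv, Fin.snoc_castSucc]
    rw [Finset.mul_sum, ← Finset.sum_add_distrib]
    exact Finset.sum_congr rfl fun t _ => by ring
  refine ⟨v, ?_, ?_⟩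
  · intro i
    ext x
    simp only [Set.mem_setOf_eq, Set.mem_inter_iff, hD₂, hC i, Set.mem_setOf_eq]
    constructor
    · intro h
      have hlt := h (Fin.last N) (Fin.castSucc_lt_last i).ne'
      rw [hlast x, hcast i x] at hlt
      have habs := abs_lt.1 (hbound x i)
      refine ⟨?_, ?_⟩
      · rcases hdich x with hd | hd
        · exfalso
          have heq := abs_of_pos (sub_pos.2 hd)
          rw [heq] at habs
          linarith [habs.2]
        · exact hd
      · intro j hj
        have hlt2 := h j.castSucc (fun hh => hj (Fin.castSucc_inj.1 hh))
        rw [hcast i x, hcast j x] at hlt2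
        have : ε * (∑ t, A t x * u j t) < ε * ∑ t, A t x * u i t := by linarith
        exact lt_of_mul_lt_mul_left this hεpos.le
    · rintro ⟨hw, hc⟩ j
      refine Fin.lastCases ?_ (fun k => ?_) j
      · intro _
        rw [hlast x, hcast i x]
        have habs := abs_lt.1 (hbound x i)
        have heq := abs_of_neg (sub_neg.2 hw)
        rw [heq] at habs
        linarith [habs.1]
      · intro hk
        rw [hcast k x, hcast i x]
        have hki : k ≠ i := fun hh => hk (by rw [hh])
        have := mul_lt_mul_of_pos_left (hc k hki) hεpos
        linarith
  · ext x
    simp only [Set.mem_setOf_eq, hD₁]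
    constructor
    · intro h
      obtain ⟨i, _⟩ := hCcov x
      have hlt := h i.castSucc (Fin.castSucc_lt_last i).ne
      rw [hlast x, hcast i x] at hlt
      have habs := abs_lt.1 (hbound x i)
      rcases hdich x with hd | hd
      · exact hd
      · exfalso
        have heq := abs_of_neg (sub_neg.2 hd)
        rw [heq] at habs
        linarith [habs.1]
    · intro hw j
      refine Fin.lastCases ?_ (fun k => ?_) j
      · intro hj; exact absurd rfl hj
      · intro _
        rw [hlast x, hcast k x]
        have habs := abs_lt.1 (hbound x k)
        have heq := abs_of_pos (sub_pos.2 hw)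
        rw [heq] at habs
        linarith [habs.2]
end

section
/- Let X = X₁ × ⋯ × X_n with |X_i| ≥ 2, let 1 ≤ k ≤ n, and let A ∈ ℝ^{a×X} have rows spanning V_k(X). Let Y = Y₁ × ⋯ × Y_m with |Y_j| ≥ 2, let Λ' be an inclusion-closed family of subsets of [m], and let B ∈ ℝ^{b×Y} have rows spanning V_{Λ'}(Y). If X can be partitioned into rank(B) pairwise disjoint radius-k Hamming balls, then max_{θ∈ℝ^{ab}} rank(𝒜_θ) = |X|. -/
open scoped Classical BigOperators

/-- The argmax (inference) set `h_θ(x) = argmax_{y} ⟨θ, A_x ⊗ B_y⟩`. -/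
noncomputable def infSet {a bn : ℕ} {X Y : Type*} [Fintype Y]
    (A : Matrix (Fin a) X ℝ) (B : Matrix (Fin bn) Y ℝ)
    (θ : Fin a × Fin bn → ℝ) (x : X) : Finset Y :=
  Finset.univ.filter (fun y : Y => ∀ y' : Y,
    ∑ s : Fin a × Fin bn, θ s * (A s.1 x * B s.2 y') ≤
      ∑ s : Fin a × Fin bn, θ s * (A s.1 x * B s.2 y))

/-- The tropical morphism matrix `𝒜_θ` with columns
`A_x ⊗ ((1/|h_θ(x)|) ∑_{y ∈ h_θ(x)} B_y)`. -/
noncomputable def tropMat {a bn : ℕ} {X Y : Type*} [Fintype Y]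
    (A : Matrix (Fin a) X ℝ) (B : Matrix (Fin bn) Y ℝ)
    (θ : Fin a × Fin bn → ℝ) : Matrix (Fin a × Fin bn) X ℝ :=
  fun p x =>
    A p.1 x * (((infSet A B θ x).card : ℝ)⁻¹ * ∑ y ∈ infSet A B θ x, B p.2 y)

/-!
Relative to a base point, a point `u` of a product encodes a partial assignment (its values where
it leaves the base point), and the indicators `extInd u` of the extensions of these assignments
form a unitriangular system. Those with support in `Λ'` span `V_{Λ'}`, so there are at least
`rank B` of them, and each Hamming ball `j` of the partition gets its own pattern `p j`.

Choose `θ` with score `∑_j C ^ |supp (p j)| * (2k + 1 - 2 d(x, c_j)) * extInd (p j) y`. For `x` in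
ball `j` the argmax set is the set of `y` extending exactly the same patterns as `p j`, so every
`extInd (p j')` is constant on it. Hence the row space of `𝒜_θ` contains `f(x) * extInd (p j') (p j)`
for all `f ∈ V_k`, so by unitriangularity every `f * 1_{ball j}`. Since `V_k` restricted to a
radius-`k` ball is all functions on it (unitriangularity again, centred at `c_j`), the row space
is everything.
-/

namespace TropicalKronecker

open Finset Submodule

section Patterns

variable {ι : Type*} [Fintype ι] {β : ι → Type*} [∀ i, DecidableEq (β i)]

def supp (y₀ u : ∀ i, β i) : Finset ι := {i | u i ≠ y₀ i}

/-- Relative to the base point `y₀`, the point `u` encodes the partial assignment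
`u|_{supp y₀ u}`. -/
def Extends (y₀ u y : ∀ i, β i) : Prop := ∀ i ∈ supp y₀ u, y i = u i

noncomputable def extInd (y₀ u : ∀ i, β i) : (∀ i, β i) → ℝ :=
  fun y => if Extends y₀ u y then 1 else 0

variable {y₀ u w y : ∀ i, β i}

theorem mem_supp {i : ι} : i ∈ supp y₀ u ↔ u i ≠ y₀ i := by simp [supp]

theorem card_supp : (supp y₀ u).card = hammingDist u y₀ := rfl

theorem Extends.refl (y₀ u : ∀ i, β i) : Extends y₀ u u := fun _ _ => rfl

theorem Extends.supp_subset (h : Extends y₀ u y) : supp y₀ u ⊆ supp y₀ y := by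
  intro i hi
  rw [mem_supp, h i hi]
  exact mem_supp.1 hi

theorem Extends.trans (hwu : Extends y₀ w u) (huy : Extends y₀ u y) : Extends y₀ w y :=
  fun i hi => (huy i (hwu.supp_subset hi)).trans (hwu i hi)

theorem Extends.eq_of_hammingDist_le (h : Extends y₀ u y)
    (hle : hammingDist y y₀ ≤ hammingDist u y₀) : u = y := by
  have hsupp := eq_of_subset_of_card_le h.supp_subset hle
  funext i
  by_cases hi : i ∈ supp y₀ u
  · exact (h i hi).symm
  · have hi' : i ∉ supp y₀ y := hsupp ▸ hi
    rw [mem_supp, not_not] at hi hi'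
    rw [hi, hi']

theorem extInd_of_extends (h : Extends y₀ u y) : extInd y₀ u y = 1 := if_pos h

theorem extInd_of_not_extends (h : ¬Extends y₀ u y) : extInd y₀ u y = 0 := if_neg h

theorem extInd_self (y₀ u : ∀ i, β i) : extInd y₀ u u = 1 :=
  extInd_of_extends (Extends.refl y₀ u)

theorem extInd_congr {y y' : ∀ i, β i} (h : ∀ i ∈ supp y₀ u, y i = y' i) :
    extInd y₀ u y = extInd y₀ u y' := by
  have : Extends y₀ u y ↔ Extends y₀ u y' :=
    forall₂_congr fun i hi => by rw [h i hi]
  simp only [extInd, this]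

/-- The matrix `(extInd y₀ (p j') (p j))` is unitriangular for the order by distance to `y₀`,
so it is invertible. -/
theorem exists_sum_extInd_eq {κ : Type*} (y₀ : ∀ i, β i) {p : κ → ∀ i, β i}
    (hp : Function.Injective p) (g : κ → ℝ) (s : Finset κ) :
    ∃ α : κ → ℝ, ∀ j ∈ s, ∑ j' ∈ s, α j' * extInd y₀ (p j') (p j) = g j := by
  induction s using Finset.strongInduction with
  | H s ih =>
  rcases s.eq_empty_or_nonempty with rfl | hs
  · exact ⟨0, by simp⟩
  obtain ⟨j₀, hj₀, hmax⟩ := s.exists_max_image (fun j => hammingDist (p j) y₀) hs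
  obtain ⟨α, hα⟩ := ih (s.erase j₀) (erase_ssubset hj₀)
  have hvanish : ∀ j ∈ s.erase j₀, extInd y₀ (p j₀) (p j) = 0 := fun j hj =>
    extInd_of_not_extends fun hext =>
      ne_of_mem_erase hj (hp (hext.eq_of_hammingDist_le (hmax j (mem_of_mem_erase hj)))).symm
  set v := g j₀ - ∑ j' ∈ s.erase j₀, α j' * extInd y₀ (p j') (p j₀)
  have hrest : ∀ j, ∑ j' ∈ s.erase j₀, Function.update α j₀ v j' * extInd y₀ (p j') (p j)
      = ∑ j' ∈ s.erase j₀, α j' * extInd y₀ (p j') (p j) := fun j =>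
    sum_congr rfl fun j' hj' => by rw [Function.update_of_ne (ne_of_mem_erase hj')]
  refine ⟨Function.update α j₀ v, fun j hj => ?_⟩
  rw [← add_sum_erase s _ hj₀, Function.update_self, hrest]
  by_cases hjj : j = j₀
  · subst hjj
    rw [extInd_self]
    ring
  · rw [hvanish j (mem_erase.2 ⟨hjj, hj⟩), mul_zero, zero_add, hα j (mem_erase.2 ⟨hjj, hj⟩)]

end Patterns

section DependsOn

variable {ι : Type*} [Fintype ι] {β : ι → Type*} [∀ i, DecidableEq (β i)] [∀ i, Fintype (β i)]

theorem mem_span_extInd_of_dependsOn (y₀ : ∀ i, β i) {s : Finset ι} {f : (∀ i, β i) → ℝ}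
    (hf : ∀ y y' : ∀ i, β i, (∀ i ∈ s, y i = y' i) → f y = f y') :
    f ∈ span ℝ (extInd y₀ '' {u | supp y₀ u ⊆ s}) := by
  set Q : Finset (∀ i, β i) := {u | supp y₀ u ⊆ s}
  obtain ⟨α, hα⟩ := exists_sum_extInd_eq y₀ Function.injective_id f Q
  -- `f` and every `extInd y₀ u` with `u ∈ Q` factor through the projection `π` onto `Q`
  let π : (∀ i, β i) → (∀ i, β i) := fun y i => if i ∈ s then y i else y₀ i
  have hπQ : ∀ y, π y ∈ Q := fun y => mem_filter.2 ⟨mem_univ _, fun i hi => by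
    by_contra his
    exact mem_supp.1 hi (if_neg his)⟩
  have hπ : ∀ y, ∀ i ∈ s, π y i = y i := fun y i hi => if_pos hi
  have hf_eq : f = ∑ u ∈ Q, α u • extInd y₀ u := by
    funext y
    rw [hf y (π y) fun i hi => (hπ y i hi).symm, ← hα _ (hπQ y)]
    simp only [Finset.sum_apply, Pi.smul_apply, smul_eq_mul, id]
    refine sum_congr rfl fun u hu => ?_
    rw [extInd_congr fun i hi => hπ y i ((mem_filter.1 hu).2 hi)]
  rw [hf_eq]
  exact sum_mem fun u hu => smul_mem _ _ (subset_span ⟨u, (mem_filter.1 hu).2, rfl⟩)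

end DependsOn

section HierarchicalModels

variable {m : ℕ} {r : Fin m → ℕ} {Λ : Finset (Finset (Fin m))}

theorem extInd_mem_VLam {y₀ u : ∀ j, Fin (r j)} (hu : supp y₀ u ∈ Λ) :
    extInd y₀ u ∈ VLam m r Λ :=
  subset_span ⟨supp y₀ u, hu, fun _ _ => extInd_congr⟩

theorem VLam_le_span_extInd (y₀ : ∀ j, Fin (r j)) (hΛ : ∀ s ∈ Λ, ∀ t ⊆ s, t ∈ Λ) :
    VLam m r Λ ≤ span ℝ (extInd y₀ '' {u | supp y₀ u ∈ Λ}) := by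
  rw [VLam, span_le]
  rintro f ⟨s, hs, hf⟩
  exact span_mono (Set.image_mono fun u (hu : supp y₀ u ⊆ s) => hΛ s hs _ hu)
    (mem_span_extInd_of_dependsOn y₀ hf)

theorem rank_le_card_of_span_eq_VLam (y₀ : ∀ j, Fin (r j)) (hΛ : ∀ s ∈ Λ, ∀ t ⊆ s, t ∈ Λ)
    {bn : ℕ} {B : Matrix (Fin bn) (∀ j, Fin (r j)) ℝ} (hB : span ℝ (Set.range B) = VLam m r Λ) :
    B.rank ≤ Fintype.card {u // supp y₀ u ∈ Λ} := by
  rw [Matrix.rank_eq_finrank_span_row]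
  calc Module.finrank ℝ (span ℝ (Set.range B))
      ≤ Module.finrank ℝ (span ℝ (extInd y₀ '' {u | supp y₀ u ∈ Λ})) :=
        finrank_mono (hB ▸ VLam_le_span_extInd y₀ hΛ)
    _ ≤ Fintype.card {u // supp y₀ u ∈ Λ} := by
        rw [Set.image_eq_range]
        exact finrank_range_le_card _

end HierarchicalModels

section InteractionModels

variable {n : ℕ} {q : Fin n → ℕ} {k : ℕ}

theorem extInd_mem_Vk {z w : ∀ i, Fin (q i)} (hw : hammingDist w z ≤ k) :
    extInd z w ∈ Vk n q k :=
  subset_span ⟨supp z w, card_supp.trans_le hw, fun _ _ => extInd_congr⟩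

theorem margin_mem_Vk (hk : 1 ≤ k) (z : ∀ i, Fin (q i)) :
    (fun x => (2 * k + 1 : ℝ) - 2 * hammingDist x z) ∈ Vk n q k := by
  have hdist : (fun x => (2 * k + 1 : ℝ) - 2 * hammingDist x z)
      = (fun _ => (2 * k + 1 : ℝ)) - ∑ i, (2 : ℝ) • fun x => if x i ≠ z i then 1 else 0 := by
    funext x
    simp [hammingDist, Finset.card_filter, Finset.mul_sum]
  rw [hdist]
  refine sub_mem (subset_span ⟨∅, Nat.zero_le k, fun _ _ _ => rfl⟩)
    (sum_mem fun i _ => smul_mem _ _ (subset_span ⟨{i}, by simpa using hk, fun x x' h => ?_⟩))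
  simp only [h i (mem_singleton_self i)]

end InteractionModels

section Tropical

variable {a bn : ℕ} {X Y : Type*}
  (A : Matrix (Fin a) X ℝ) (B : Matrix (Fin bn) Y ℝ)

theorem exists_score_eq_sum {κ : Type*} [Fintype κ] {f : κ → X → ℝ} {g : κ → Y → ℝ}
    (hf : ∀ j, f j ∈ span ℝ (Set.range A)) (hg : ∀ j, g j ∈ span ℝ (Set.range B)) :
    ∃ θ : Fin a × Fin bn → ℝ, ∀ x y,
      ∑ s : Fin a × Fin bn, θ s * (A s.1 x * B s.2 y) = ∑ j, f j x * g j y := by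
  choose α hα using fun j => (mem_span_range_iff_exists_fun ℝ).1 (hf j)
  choose γ hγ using fun j => (mem_span_range_iff_exists_fun ℝ).1 (hg j)
  refine ⟨fun s => ∑ j, α j s.1 * γ j s.2, fun x y => ?_⟩
  calc ∑ s : Fin a × Fin bn, (∑ j, α j s.1 * γ j s.2) * (A s.1 x * B s.2 y)
      = ∑ j, ∑ s : Fin a × Fin bn, (α j s.1 * A s.1 x) * (γ j s.2 * B s.2 y) := by
        simp only [Finset.sum_mul]
        rw [Finset.sum_comm]
        exact Finset.sum_congr rfl fun j _ => Finset.sum_congr rfl fun s _ => by ring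
    _ = ∑ j, f j x * g j y := by
        simp only [← hα, ← hγ, Finset.sum_apply, Pi.smul_apply, smul_eq_mul, Finset.sum_mul_sum,
          Fintype.sum_prod_type]

theorem mul_mem_span_rows_tropMat [Fintype Y] (θ : Fin a × Fin bn → ℝ) {f : X → ℝ} {g : Y → ℝ}
    (hf : f ∈ span ℝ (Set.range A)) (hg : g ∈ span ℝ (Set.range B)) {v : X → ℝ}
    (hv : ∀ x, (infSet A B θ x).Nonempty ∧ ∀ y ∈ infSet A B θ x, g y = v x) :
    (fun x => f x * v x) ∈ span ℝ (Set.range (tropMat A B θ)) := by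
  obtain ⟨α, rfl⟩ := (mem_span_range_iff_exists_fun ℝ).1 hf
  obtain ⟨γ, rfl⟩ := (mem_span_range_iff_exists_fun ℝ).1 hg
  have hrows : (fun x => (∑ i, α i • A i) x * v x)
      = ∑ s : Fin a × Fin bn, (α s.1 * γ s.2) • tropMat A B θ s := by
    funext x
    obtain ⟨hne, hconst⟩ := hv x
    set avg : Fin bn → ℝ := fun l =>
      ((infSet A B θ x).card : ℝ)⁻¹ * ∑ y ∈ infSet A B θ x, B l y
    have hcard : ((infSet A B θ x).card : ℝ) ≠ 0 := by exact_mod_cast hne.card_pos.ne'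
    have hv' : v x = ∑ l, γ l * avg l := by
      calc v x = ((infSet A B θ x).card : ℝ)⁻¹ * ∑ y ∈ infSet A B θ x, (∑ l, γ l • B l) y := by
            rw [Finset.sum_congr rfl hconst, sum_const, nsmul_eq_mul, inv_mul_cancel_left₀ hcard]
        _ = ∑ l, γ l * avg l := by
            simp only [avg, Finset.sum_apply, Pi.smul_apply, smul_eq_mul, Finset.mul_sum]
            rw [Finset.sum_comm]
            exact Finset.sum_congr rfl fun l _ => Finset.sum_congr rfl fun y _ => by ring
    simp only [hv', Finset.sum_apply, Pi.smul_apply, smul_eq_mul, Finset.sum_mul_sum,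
      Fintype.sum_prod_type, tropMat]
    exact Finset.sum_congr rfl fun i _ => Finset.sum_congr rfl fun l _ => by ring
  rw [hrows]
  exact sum_mem fun s _ => smul_mem _ _ (subset_span ⟨s, rfl⟩)

end Tropical

section Argmax

variable {ι : Type*} [Fintype ι] {β : ι → Type*} [∀ i, DecidableEq (β i)]
  {κ : Type*} [Fintype κ] (y₀ : ∀ i, β i) {p : κ → ∀ i, β i} {j₀ : κ}

theorem extInd_nonneg (u y : ∀ i, β i) : 0 ≤ extInd y₀ u y := by
  unfold extInd
  split_ifs <;> norm_num

theorem sum_extInd_le_and_eq {a : κ → ℝ} (ha : ∀ j ≠ j₀, a j < 0)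
    (hpos : 0 < ∑ j, a j * extInd y₀ (p j) (p j₀)) (y : ∀ i, β i) :
    ∑ j, a j * extInd y₀ (p j) y ≤ ∑ j, a j * extInd y₀ (p j) (p j₀) ∧
      (∑ j, a j * extInd y₀ (p j) (p j₀) ≤ ∑ j, a j * extInd y₀ (p j) y →
        ∀ j, extInd y₀ (p j) y = extInd y₀ (p j) (p j₀)) := by
  by_cases hy : Extends y₀ (p j₀) y
  · have hterm : ∀ j ∈ univ,
        a j * extInd y₀ (p j) y - a j * extInd y₀ (p j) (p j₀) ≤ 0 := by
      intro j _
      by_cases hj : j = j₀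
      · rw [hj, extInd_of_extends hy, extInd_self, sub_self]
      rw [← mul_sub]
      refine mul_nonpos_of_nonpos_of_nonneg (ha j hj).le (sub_nonneg.2 ?_)
      by_cases hext : Extends y₀ (p j) (p j₀)
      · rw [extInd_of_extends hext, extInd_of_extends (hext.trans hy)]
      · rw [extInd_of_not_extends hext]
        exact extInd_nonneg y₀ _ _
    have hdiff := sum_sub_distrib (s := univ) (f := fun j => a j * extInd y₀ (p j) y)
      (g := fun j => a j * extInd y₀ (p j) (p j₀))
    refine ⟨by linarith [sum_nonpos hterm], fun hle j => ?_⟩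
    have hzero := (sum_eq_zero_iff_of_nonpos hterm).1 (by linarith [sum_nonpos hterm])
    by_cases hj : j = j₀
    · rw [hj, extInd_of_extends hy, extInd_self]
    have hzj := hzero j (mem_univ j)
    rw [← mul_sub] at hzj
    exact sub_eq_zero.1 ((mul_eq_zero.1 hzj).resolve_left (ha j hj).ne)
  · have hle : ∑ j, a j * extInd y₀ (p j) y ≤ 0 := by
      refine sum_nonpos fun j _ => ?_
      by_cases hj : j = j₀
      · rw [hj, extInd_of_not_extends hy, mul_zero]
      exact mul_nonpos_of_nonpos_of_nonneg (ha j hj).le (extInd_nonneg y₀ _ _)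
    exact ⟨by linarith, fun h => absurd h (by linarith)⟩

/-- `C = M * |κ| + 1` makes the weight `C ^ |supp (p j₀)|` exceed `M` times the total weight of the
(fewer than `|κ|`) patterns that `p j₀` strictly extends. -/
theorem sum_weighted_extInd_pos (hp : Function.Injective p) {M : ℝ} (hM : 0 ≤ M) {σ : κ → ℝ}
    (hσ₀ : 1 ≤ σ j₀) (hσ : ∀ j, -M ≤ σ j) :
    0 < ∑ j, (M * Fintype.card κ + 1) ^ hammingDist (p j) y₀ * σ j * extInd y₀ (p j) (p j₀) := by
  set N : ℝ := (Fintype.card κ : ℝ)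
  set C : ℝ := M * N + 1
  set W : κ → ℝ := fun j => C ^ hammingDist (p j) y₀
  have hC : 1 ≤ C := by simp only [C, N]; nlinarith [Nat.cast_nonneg (α := ℝ) (Fintype.card κ)]
  have hW : ∀ j, 0 < W j := fun j => pow_pos (by linarith) _
  have hsmall : ∀ j ∈ univ.erase j₀, -(M * W j₀) ≤ C * (W j * σ j * extInd y₀ (p j) (p j₀)) := by
    intro j hj
    by_cases hext : Extends y₀ (p j) (p j₀)
    · have hlt : hammingDist (p j) y₀ < hammingDist (p j₀) y₀ := lt_of_not_ge fun hle =>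
        ne_of_mem_erase hj (hp (hext.eq_of_hammingDist_le hle))
      have hCW : C * W j ≤ W j₀ := by
        simpa only [W, ← pow_succ'] using pow_le_pow_right₀ hC hlt
      rw [extInd_of_extends hext, mul_one]
      nlinarith [mul_le_mul_of_nonneg_left (hσ j) (mul_nonneg (by linarith : (0:ℝ) ≤ C) (hW j).le)]
    · rw [extInd_of_not_extends hext, mul_zero, mul_zero, neg_nonpos]
      exact mul_nonneg hM (hW j₀).le
  have hcard : ((univ.erase j₀).card : ℝ) ≤ N :=
    Nat.cast_le.2 (card_erase_le.trans card_univ.le)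
  have hrest := card_nsmul_le_sum _ _ _ hsmall
  rw [← mul_sum, nsmul_eq_mul] at hrest
  rw [← add_sum_erase _ _ (mem_univ j₀), extInd_self, mul_one]
  have hlead : C * W j₀ ≤ C * (W j₀ * σ j₀) := by
    nlinarith [mul_le_mul_of_nonneg_left hσ₀ (mul_nonneg (by linarith : (0:ℝ) ≤ C) (hW j₀).le)]
  have hMW : 0 ≤ M * W j₀ := mul_nonneg hM (hW j₀).le
  refine pos_of_mul_pos_right (a := C) ?_ (by linarith)
  nlinarith [hW j₀]

end Argmax

section BallPartition

variable {n : ℕ} {q : Fin n → ℕ} {k : ℕ} {N : ℕ} {c : Fin N → ∀ i, Fin (q i)}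
  {J : (∀ i, Fin (q i)) → Fin N}

/-- On a radius-`k` Hamming ball, `V_k` restricts to all functions. -/
theorem span_eq_top_of_mul_ballIndicator_mem (hJ : ∀ x j, J x = j ↔ hammingDist x (c j) ≤ k)
    (R : Submodule ℝ ((∀ i, Fin (q i)) → ℝ))
    (hR : ∀ f ∈ Vk n q k, ∀ j, (fun x => f x * if J x = j then 1 else 0) ∈ R) : R = ⊤ := by
  rw [eq_top_iff, ← (Pi.basisFun ℝ _).span_eq, span_le]
  rintro _ ⟨x', rfl⟩
  set ball := univ.filter fun x => J x = J x'
  obtain ⟨α, hα⟩ := exists_sum_extInd_eq (c (J x')) Function.injective_id (Pi.single x' 1) ball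
  have hsingle : Pi.basisFun ℝ _ x' = ∑ w ∈ ball,
      α w • fun x => extInd (c (J x')) w x * if J x = J x' then 1 else 0 := by
    funext x
    simp only [Pi.basisFun_apply, Finset.sum_apply, Pi.smul_apply, smul_eq_mul]
    by_cases hx : J x = J x'
    · simp only [hx, if_true, mul_one]
      exact (hα x (mem_filter.2 ⟨mem_univ _, hx⟩)).symm
    · have hne : x ≠ x' := fun h => hx (h ▸ rfl)
      simp [hx, hne]
  rw [hsingle]
  exact sum_mem fun w hw =>
    smul_mem _ _ (hR _ (extInd_mem_Vk ((hJ _ _).1 (mem_filter.1 hw).2)) _)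

variable {a : ℕ} (A : Matrix (Fin a) (∀ i, Fin (q i)) ℝ)
  {m : ℕ} {r : Fin m → ℕ} {bn : ℕ} (B : Matrix (Fin bn) (∀ j, Fin (r j)) ℝ)
  {y₀ : ∀ j, Fin (r j)} {p : Fin N → ∀ j, Fin (r j)}

/-- `θ` realizes the score `∑_j C ^ |supp (p j)| * (2k + 1 - 2 d(x, c j)) * extInd (p j) y`, whose
`j`-th margin is positive exactly on the `j`-th ball. -/
theorem exists_theta_infSet (hk : 1 ≤ k) (hA : span ℝ (Set.range A) = Vk n q k)
    (hp : Function.Injective p) (hpB : ∀ j, extInd y₀ (p j) ∈ span ℝ (Set.range B))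
    (hJ : ∀ x j, J x = j ↔ hammingDist x (c j) ≤ k) :
    ∃ θ, ∀ x, p (J x) ∈ infSet A B θ x ∧
      ∀ y ∈ infSet A B θ x, ∀ j, extInd y₀ (p j) y = extInd y₀ (p j) (p (J x)) := by
  set W : Fin N → ℝ := fun j =>
    (2 * n * Fintype.card (Fin N) + 1 : ℝ) ^ hammingDist (p j) y₀
  set σ : Fin N → (∀ i, Fin (q i)) → ℝ := fun j x => 2 * k + 1 - 2 * hammingDist x (c j)
  obtain ⟨θ, hθ⟩ := exists_score_eq_sum A B (f := fun j => W j • σ j)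
    (fun j => hA ▸ smul_mem _ _ (margin_mem_Vk hk (c j))) hpB
  refine ⟨θ, fun x => ?_⟩
  have hdist : ∀ j, (hammingDist x (c j) : ℝ) ≤ n := fun j => by
    exact_mod_cast (hammingDist_le_card_fintype (x := x) (y := c j)).trans_eq (Fintype.card_fin n)
  have hin : (hammingDist x (c (J x)) : ℝ) ≤ k := by exact_mod_cast (hJ x _).1 rfl
  have hout : ∀ j ≠ J x, (k + 1 : ℝ) ≤ hammingDist x (c j) := fun j hj => by
    exact_mod_cast Nat.not_le.1 fun h => hj ((hJ x j).2 h).symm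
  have hneg : ∀ j ≠ J x, W j * σ j x < 0 := fun j hj =>
    mul_neg_of_pos_of_neg (pow_pos (by positivity) _) (by linarith [hout j hj])
  have hmax := sum_extInd_le_and_eq y₀ hneg <|
    sum_weighted_extInd_pos y₀ hp (M := 2 * n) (by positivity) (σ := fun j => σ j x)
      (by linarith) fun j => by linarith [hdist j, (Nat.cast_nonneg k : (0 : ℝ) ≤ k)]
  simp only [infSet, mem_filter, mem_univ, true_and, hθ, Pi.smul_apply, smul_eq_mul]
  exact ⟨fun y => (hmax y).1, fun y hy => (hmax y).2 (hy _)⟩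

theorem span_rows_tropMat_eq_top (hA : span ℝ (Set.range A) = Vk n q k)
    (hp : Function.Injective p) (hpB : ∀ j, extInd y₀ (p j) ∈ span ℝ (Set.range B))
    (hJ : ∀ x j, J x = j ↔ hammingDist x (c j) ≤ k) {θ : Fin a × Fin bn → ℝ}
    (hθ : ∀ x, p (J x) ∈ infSet A B θ x ∧
      ∀ y ∈ infSet A B θ x, ∀ j, extInd y₀ (p j) y = extInd y₀ (p j) (p (J x))) :
    span ℝ (Set.range (tropMat A B θ)) = ⊤ := by
  refine span_eq_top_of_mul_ballIndicator_mem hJ _ fun f hf j => ?_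
  obtain ⟨α, hα⟩ := exists_sum_extInd_eq y₀ hp (fun j' => if j' = j then 1 else 0) univ
  have hball : (fun x => f x * if J x = j then 1 else 0)
      = ∑ j', α j' • fun x => f x * extInd y₀ (p j') (p (J x)) := by
    funext x
    rw [← hα (J x) (mem_univ _)]
    simp only [Finset.sum_apply, Pi.smul_apply, smul_eq_mul, Finset.mul_sum]
    exact Finset.sum_congr rfl fun j' _ => by ring
  rw [hball]
  exact sum_mem fun j' _ => smul_mem _ _ <| mul_mem_span_rows_tropMat A B θ (hA ▸ hf) (hpB j')
    fun x => ⟨⟨_, (hθ x).1⟩, fun y hy => (hθ x).2 y hy j'⟩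

end BallPartition

end TropicalKronecker

open TropicalKronecker Submodule in
theorem tropical_general_kronecker_covering_general
    (n : ℕ) (q : Fin n → ℕ)
    (k : ℕ) (hk1 : 1 ≤ k)
    (a : ℕ) (A : Matrix (Fin a) (∀ i, Fin (q i)) ℝ)
    (hA : Submodule.span ℝ (Set.range A) = Vk n q k)
    (m : ℕ) (r : Fin m → ℕ) (hr : ∀ j, 2 ≤ r j)
    (Λ' : Finset (Finset (Fin m)))
    (hΛ' : ∀ s ∈ Λ', ∀ t ⊆ s, t ∈ Λ')
    (bn : ℕ) (B : Matrix (Fin bn) (∀ j, Fin (r j)) ℝ)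
    (hB : Submodule.span ℝ (Set.range B) = VLam m r Λ')
    (c : Fin B.rank → ∀ i, Fin (q i))
    (hdisj : ∀ j j', j ≠ j' →
      ∀ x, ¬(hammingDist x (c j) ≤ k ∧ hammingDist x (c j') ≤ k))
    (hcov : ∀ x : ∀ i, Fin (q i), ∃ j : Fin B.rank, hammingDist x (c j) ≤ k) :
    IsGreatest {s : ℕ | ∃ θ : Fin a × Fin bn → ℝ, s = (tropMat A B θ).rank}
      (Fintype.card (∀ i, Fin (q i))) := by
  let y₀ : ∀ j, Fin (r j) := fun j => ⟨0, by linarith [hr j]⟩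
  obtain ⟨e⟩ := Function.Embedding.nonempty_of_card_le <|
    (Fintype.card_fin B.rank).trans_le (rank_le_card_of_span_eq_VLam y₀ hΛ' hB)
  have hp : Function.Injective fun j => (e j).1 := Subtype.val_injective.comp e.injective
  have hpB : ∀ j, extInd y₀ (e j).1 ∈ span ℝ (Set.range B) := fun j =>
    hB ▸ extInd_mem_VLam (e j).2
  choose J hJ using hcov
  have hJ_iff : ∀ x j, J x = j ↔ hammingDist x (c j) ≤ k := fun x j =>
    ⟨fun h => h ▸ hJ x, fun h => by_contra fun hne => hdisj j (J x) (Ne.symm hne) x ⟨h, hJ x⟩⟩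
  obtain ⟨θ, hθ⟩ := exists_theta_infSet A B hk1 hA hp hpB hJ_iff
  refine ⟨⟨θ, ?_⟩, fun _ ⟨θ', hθ'⟩ => hθ' ▸ Matrix.rank_le_card_width _⟩
  rw [Matrix.rank_eq_finrank_span_row, Matrix.row,
    span_rows_tropMat_eq_top A B hA hp hpB hJ_iff hθ, finrank_top,
    Module.finrank_fintype_fun_eq_card]

/-- general Kronecker product of hierarchical models, covering case.
Visible `k`-interaction model, hidden hierarchical model with interactions `Λ'`: if `X`
can be partitioned into `rank B` pairwise disjoint radius-`k` Hamming balls, then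
`max_θ rank 𝒜_θ = |X|`. -/
theorem tropical_general_kronecker_covering
    (n : ℕ) (q : Fin n → ℕ) (hq : ∀ i, 2 ≤ q i)
    (k : ℕ) (hk1 : 1 ≤ k) (hkn : k ≤ n)
    (a : ℕ) (A : Matrix (Fin a) (∀ i, Fin (q i)) ℝ)
    (hA : Submodule.span ℝ (Set.range A) = Vk n q k)
    (m : ℕ) (r : Fin m → ℕ) (hr : ∀ j, 2 ≤ r j)
    (Λ' : Finset (Finset (Fin m))) (hempty : ∅ ∈ Λ')
    (hΛ' : ∀ s ∈ Λ', ∀ t ⊆ s, t ∈ Λ')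
    (bn : ℕ) (B : Matrix (Fin bn) (∀ j, Fin (r j)) ℝ)
    (hB : Submodule.span ℝ (Set.range B) = VLam m r Λ')
    (c : Fin B.rank → ∀ i, Fin (q i))
    (hdisj : ∀ j j', j ≠ j' →
      ∀ x, ¬(hammingDist x (c j) ≤ k ∧ hammingDist x (c j') ≤ k))
    (hcov : ∀ x : ∀ i, Fin (q i), ∃ j : Fin B.rank, hammingDist x (c j) ≤ k) :
    IsGreatest {s : ℕ | ∃ θ : Fin a × Fin bn → ℝ, s = (tropMat A B θ).rank}
      (Fintype.card (∀ i, Fin (q i))) :=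
  tropical_general_kronecker_covering_general n q k hk1 a A hA m r hr Λ' hΛ' bn B hB c hdisj hcov
end

section
/- Let X be a finite nonempty set, let A ∈ ℝ^{a×X} be a matrix whose first row is the all-ones vector, let m ≥ 1, and let σ(t) = e^t/(1+e^t). For W ∈ ℝ^{m×a} let M(W) ∈ ℝ^{a(m+1)×X} be the matrix whose column indexed by x is A_x ⊗ (1, σ((W A_x)₁), …, σ((W A_x)_m)) ∈ ℝ^{a(m+1)}, and for W̃ ∈ ℝ^{(m+1)×a} let M̃(W̃) ∈ ℝ^{a(m+1)×X} be the matrix whose column indexed by x is A_x ⊗ s(W̃ A_x), where s : ℝ^{m+1} → ℝ^{m+1} is the softmax map s(v)_j = e^{v_j}/∑_{i=0}^{m} e^{v_i}. Then max_{W∈ℝ^{m×a}} rank M(W) ≥ max_{W̃∈ℝ^{(m+1)×a}} rank M̃(W̃). -/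
open scoped Classical BigOperators

/-- The matrix `M(W)` with columns `A_x ⊗ (1, σ((WA_x)₁), …, σ((WA_x)_m))`, where
`σ(t) = e^t/(1+e^t)`: the rank-relevant Jacobian matrix of the Kronecker product model
with `m` independent binary hidden variables. -/
noncomputable def Mrbm {X : Type*} [Fintype X] {a m : ℕ} (A : Matrix (Fin a) X ℝ)
    (W : Matrix (Fin m) (Fin a) ℝ) : Matrix (Fin a × Fin (m + 1)) X ℝ :=
  fun p x => A p.1 x *
    (Fin.cases 1
      (fun l : Fin m =>
        Real.exp (W.mulVec (fun i => A i x) l) /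
          (1 + Real.exp (W.mulVec (fun i => A i x) l)))
      p.2)

/-- The matrix `M̃(W̃)` with columns `A_x ⊗ softmax(W̃ A_x)`: the rank-relevant Jacobian
matrix of the `(m+1)`-mixture of the exponential family `E_A`. -/
noncomputable def Mmix {X : Type*} [Fintype X] {a m : ℕ} (A : Matrix (Fin a) X ℝ)
    (Wt : Matrix (Fin (m + 1)) (Fin a) ℝ) : Matrix (Fin a × Fin (m + 1)) X ℝ :=
  fun p x => A p.1 x *
    (Real.exp (Wt.mulVec (fun i => A i x) p.2) /
      ∑ l : Fin (m + 1), Real.exp (Wt.mulVec (fun i => A i x) l))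

/-!
Fix `W̃` and write `v = W̃ A_x`. The weights `W_c` with rows `W̃_{l+1} - W̃_0 - c e_{i₀}` (where row
`i₀` of `A` is all ones) give `(W_c A_x)_l = v_{l+1} - v_0 - c`, and `e^c σ(t - c) → e^t` as
`c → ∞`. Hence scaling the hidden rows of `M(W_c)` by `e^c` and column `x` by `softmax(v)_0`
yields matrices converging to `M̃(W̃)`. Scaling does not raise the rank, and rank is lower
semicontinuous, so `rank M̃(W̃) ≤ rank M(W_c)` for large `c`.
-/

open Filter Topology Matrix Real

theorem Matrix.eventually_rank_le {𝕜 : Type*} [NontriviallyNormedField 𝕜] [CompleteSpace 𝕜]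
    {m n : Type*} [Fintype m] [Fintype n] [DecidableEq n] (N : Matrix m n 𝕜) :
    ∀ᶠ M in 𝓝 N, N.rank ≤ M.rank := by
  let Φ : Matrix m n 𝕜 →ₗ[𝕜] (n → 𝕜) →L[𝕜] (m → 𝕜) :=
    LinearMap.toContinuousLinearMap.toLinearMap ∘ₗ Matrix.toLin'.toLinearMap
  have hrank : ∀ M, (Φ M : (n → 𝕜) →ₗ[𝕜] m → 𝕜).rank = M.rank := fun M =>
    (Module.finrank_eq_rank ..).symm
  have hopen := (isOpen_setOfPred_nat_le_rank N.rank).preimage Φ.continuous_of_finiteDimensional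
  filter_upwards [hopen.mem_nhds (le_of_eq (hrank N).symm)] with M hM
  have hM : (N.rank : Cardinal) ≤ M.rank := hrank M ▸ hM
  exact_mod_cast hM

theorem Real.tendsto_exp_mul_sigmoid_sub (t : ℝ) :
    Tendsto (fun c => exp c * (exp (t - c) / (1 + exp (t - c)))) atTop (𝓝 (exp t)) := by
  have hdecay : Tendsto (fun c => exp (t - c)) atTop (𝓝 0) :=
    tendsto_exp_atBot.comp (tendsto_atBot_add_const_left _ t tendsto_neg_atTop_atBot)
  have hlim := (tendsto_const_nhds (x := exp t)).div (hdecay.const_add 1) (by norm_num)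
  rw [add_zero, div_one] at hlim
  refine hlim.congr fun c => ?_
  rw [Pi.div_apply, ← mul_div_assoc, ← exp_add, add_sub_cancel]

section ShiftedWeights

variable {X : Type*} {a m : ℕ}

def shiftedWeights (Wt : Matrix (Fin (m + 1)) (Fin a) ℝ) (i₀ : Fin a) (c : ℝ) :
    Matrix (Fin m) (Fin a) ℝ :=
  Matrix.of fun l i => Wt l.succ i - Wt 0 i - (Pi.single i₀ c : Fin a → ℝ) i

theorem shiftedWeights_mulVec {A : Matrix (Fin a) X ℝ} {i₀ : Fin a} (hA : ∀ x, A i₀ x = 1)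
    (Wt : Matrix (Fin (m + 1)) (Fin a) ℝ) (c : ℝ) (x : X) (l : Fin m) :
    (shiftedWeights Wt i₀ c *ᵥ fun i => A i x) l =
      (Wt *ᵥ fun i => A i x) l.succ - (Wt *ᵥ fun i => A i x) 0 - c := by
  simp [shiftedWeights, mulVec, dotProduct, sub_mul, Finset.sum_sub_distrib, Pi.single_apply, hA]

theorem tendsto_diagonal_mul_Mrbm_shiftedWeights_mul_diagonal [Fintype X]
    {A : Matrix (Fin a) X ℝ} {i₀ : Fin a} (hA : ∀ x, A i₀ x = 1)
    (Wt : Matrix (Fin (m + 1)) (Fin a) ℝ) :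
    Tendsto (fun c =>
        diagonal (fun p : Fin a × Fin (m + 1) => (Fin.cases 1 (fun _ => exp c) p.2 : ℝ)) *
          Mrbm A (shiftedWeights Wt i₀ c) *
          diagonal (fun x =>
            exp ((Wt *ᵥ fun i => A i x) 0) / ∑ l, exp ((Wt *ᵥ fun i => A i x) l)))
      atTop (𝓝 (Mmix A Wt)) := by
  refine tendsto_pi_nhds.2 fun ⟨i, j⟩ => tendsto_pi_nhds.2 fun x => ?_
  set v := Wt *ᵥ fun i => A i x
  simp only [mul_diagonal, diagonal_mul]
  induction j using Fin.cases with
  | zero =>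
    refine tendsto_const_nhds.congr fun c => ?_
    simp only [Mrbm, Mmix, Fin.cases_zero]
    ring
  | succ l =>
    convert ((tendsto_exp_mul_sigmoid_sub (v l.succ - v 0)).const_mul (A i x)).mul_const
      (exp (v 0) / ∑ l, exp (v l)) using 1
    · ext c
      simp only [Mrbm, Fin.cases_succ, shiftedWeights_mulVec hA]
      ring
    · simp only [Mmix, exp_sub]
      field_simp
      rfl

end ShiftedWeights

theorem rbm_rank_ge_mixture_rank_general
    {X : Type*} [Fintype X] {a m : ℕ} (ha : 0 < a)
    (A : Matrix (Fin a) X ℝ) (hA : ∀ x, A ⟨0, ha⟩ x = 1) :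
    ∀ Wt : Matrix (Fin (m + 1)) (Fin a) ℝ, ∃ W : Matrix (Fin m) (Fin a) ℝ,
      (Mmix A Wt).rank ≤ (Mrbm A W).rank := by
  intro Wt
  obtain ⟨c, hc⟩ :=
    ((tendsto_diagonal_mul_Mrbm_shiftedWeights_mul_diagonal hA Wt).eventually
      (Matrix.eventually_rank_le _)).exists
  exact ⟨shiftedWeights Wt ⟨0, ha⟩ c,
    hc.trans <| (rank_mul_le_left _ _).trans (rank_mul_le_right _ _)⟩

/-- If the first row of `A` is the all-ones vector, then
`max_W rank M(W) ≥ max_{W̃} rank M̃(W̃)`: the Kronecker product model with `m`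
independent binary hidden variables has dimension at least that of the `(m+1)`-mixture
of `E_A`. -/
theorem rbm_rank_ge_mixture_rank
    {X : Type*} [Fintype X] [Nonempty X] {a m : ℕ} (hm : 1 ≤ m) (ha : 0 < a)
    (A : Matrix (Fin a) X ℝ) (hA : ∀ x, A ⟨0, ha⟩ x = 1) :
    ∀ Wt : Matrix (Fin (m + 1)) (Fin a) ℝ, ∃ W : Matrix (Fin m) (Fin a) ℝ,
      (Mmix A Wt).rank ≤ (Mrbm A W).rank :=
  rbm_rank_ge_mixture_rank_general ha A hA
end
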